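/- arXiv:2509.11054 — 8 statements merged into one kernel-verified Lean document; each statement's English description precedes it below -/
import Mathlib

section
/- In the finite rate–distortion retrieval setup, the rate–distortion function R is convex on the set where it is finite: for all D₁, D₂ ∈ [0,1] with R(D₁) < ∞ and R(D₂) < ∞ and all λ ∈ [0,1], one has R(λ·D₁ + (1−λ)·D₂) ≤ λ·R(D₁) + (1−λ)·R(D₂). -/
open scoped BigOperators ENNReal

noncomputable section

/-- A probability mass function on a finite type, given by real weights. -/
structure FinPMF (α : Type*) [Fintype α] where
  val : α → ℝ
  nonneg : ∀ a, 0 ≤ val a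
  sum_one : ∑ a, val a = 1

/-- Expected ranking distortion of an encoder–decoder pair `(e, g)`:
`Σ_{x,y,c} p(x,y)·e(c|x)·(1 − 1/rank_{g(c)}(y))`, where the rank of `y` under a
permutation `π` is `(π⁻¹ y : ℕ) + 1`. -/
def distortion {X : Type*} [Fintype X] {N : ℕ} (p : FinPMF (X × Fin N)) {k : ℕ}
    (e : X → FinPMF (Fin k)) (g : Fin k → Equiv.Perm (Fin N)) : ℝ :=
  ∑ x, ∑ y, ∑ c, p.val (x, y) * (e x).val c *
    (1 - 1 / ((((g c)⁻¹ y : Fin N) : ℕ) + 1 : ℝ))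

/-- The rate of a randomised encoder: the mutual information
`I(X;C) = Σ_{x,c} p_X(x)·e(c|x)·log(e(c|x)/q(c))` with `q(c) = Σ_x p_X(x)·e(c|x)`.
(Terms with zero probability vanish, using `Real.log 0 = 0` and multiplication by `0`.) -/
def rate {X : Type*} [Fintype X] {N : ℕ} (p : FinPMF (X × Fin N)) {k : ℕ}
    (e : X → FinPMF (Fin k)) : ℝ :=
  ∑ x, ∑ c, (∑ y, p.val (x, y)) * (e x).val c *
    Real.log ((e x).val c / (∑ x', (∑ y, p.val (x', y)) * (e x').val c))

/-- The rate–distortion function `R(D)`: the infimum, in `[0,∞]`, of the rate over all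
codebook sizes `k ≥ 1` and all encoder–decoder pairs with expected ranking distortion
at most `D` (it is `∞` if no such pair exists). -/
def RDfun {X : Type*} [Fintype X] {N : ℕ} (p : FinPMF (X × Fin N)) (D : ℝ) : ℝ≥0∞ :=
  ⨅ (k : ℕ) (_ : 1 ≤ k) (e : X → FinPMF (Fin k)) (g : Fin k → Equiv.Perm (Fin N))
    (_ : distortion p e g ≤ D), ENNReal.ofReal (rate p e)

-- auxiliary
def mixE {X : Type*} [Fintype X] {k₁ k₂ : ℕ} (lam : ℝ) (h0 : 0 ≤ lam) (h1 : lam ≤ 1)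
    (e₁ : X → FinPMF (Fin k₁)) (e₂ : X → FinPMF (Fin k₂)) (x : X) :
    FinPMF (Fin (k₁ + k₂)) where
  val := Fin.addCases (fun i => lam * (e₁ x).val i) (fun j => (1 - lam) * (e₂ x).val j)
  nonneg := by
    intro a
    induction a using Fin.addCases with
    | left i => simpa using mul_nonneg h0 ((e₁ x).nonneg i)
    | right j => simpa using mul_nonneg (by linarith) ((e₂ x).nonneg j)
  sum_one := by
    rw [Fin.sum_univ_add]
    simp only [Fin.addCases_left, Fin.addCases_right, ← Finset.mul_sum,
      (e₁ x).sum_one, (e₂ x).sum_one]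
    ring

def mixG {N k₁ k₂ : ℕ} (g₁ : Fin k₁ → Equiv.Perm (Fin N)) (g₂ : Fin k₂ → Equiv.Perm (Fin N)) :
    Fin (k₁ + k₂) → Equiv.Perm (Fin N) := Fin.addCases g₁ g₂

lemma key_log (lam px a q : ℝ) :
    px * (lam * a) * Real.log ((lam * a) / (lam * q)) = lam * (px * a * Real.log (a / q)) := by
  rcases eq_or_ne lam 0 with h | h
  · simp [h]
  · rw [mul_div_mul_left _ _ h]; ring

lemma sum_mul_const_mul {X : Type*} [Fintype X] (f g : X → ℝ) (lam : ℝ) :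
    ∑ x, f x * (lam * g x) = lam * ∑ x, f x * g x := by
  rw [Finset.mul_sum]
  exact Finset.sum_congr rfl fun x _ => by ring

lemma rate_mix {X : Type*} [Fintype X] {N : ℕ} (p : FinPMF (X × Fin N)) {k₁ k₂ : ℕ}
    (lam : ℝ) (h0 : 0 ≤ lam) (h1 : lam ≤ 1)
    (e₁ : X → FinPMF (Fin k₁)) (e₂ : X → FinPMF (Fin k₂)) :
    rate p (mixE lam h0 h1 e₁ e₂) = lam * rate p e₁ + (1 - lam) * rate p e₂ := by
  simp only [rate, mixE, Fin.sum_univ_add, Fin.addCases_left, Fin.addCases_right]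
  rw [Finset.mul_sum, Finset.mul_sum, ← Finset.sum_add_distrib]
  refine Finset.sum_congr rfl fun x _ => ?_
  congr 1
  · rw [Finset.mul_sum]
    refine Finset.sum_congr rfl fun c _ => ?_
    rw [sum_mul_const_mul (fun x' => ∑ y, p.val (x', y)) (fun x' => (e₁ x').val c) lam]
    exact key_log lam _ _ _
  · rw [Finset.mul_sum]
    refine Finset.sum_congr rfl fun c _ => ?_
    rw [sum_mul_const_mul (fun x' => ∑ y, p.val (x', y)) (fun x' => (e₂ x').val c) (1 - lam)]
    exact key_log (1 - lam) _ _ _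

lemma distortion_mix {X : Type*} [Fintype X] {N : ℕ} (p : FinPMF (X × Fin N)) {k₁ k₂ : ℕ}
    (lam : ℝ) (h0 : 0 ≤ lam) (h1 : lam ≤ 1)
    (e₁ : X → FinPMF (Fin k₁)) (e₂ : X → FinPMF (Fin k₂))
    (g₁ : Fin k₁ → Equiv.Perm (Fin N)) (g₂ : Fin k₂ → Equiv.Perm (Fin N)) :
    distortion p (mixE lam h0 h1 e₁ e₂) (mixG g₁ g₂) =
      lam * distortion p e₁ g₁ + (1 - lam) * distortion p e₂ g₂ := by
  simp only [distortion, mixE, mixG, Fin.sum_univ_add, Fin.addCases_left, Fin.addCases_right]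
  rw [Finset.mul_sum, Finset.mul_sum, ← Finset.sum_add_distrib]
  refine Finset.sum_congr rfl fun x _ => ?_
  rw [Finset.mul_sum, Finset.mul_sum, ← Finset.sum_add_distrib]
  refine Finset.sum_congr rfl fun y _ => ?_
  congr 1
  · rw [Finset.mul_sum]; exact Finset.sum_congr rfl fun c _ => by ring
  · rw [Finset.mul_sum]; exact Finset.sum_congr rfl fun c _ => by ring

/-- The rate–distortion function is convex where it is finite:
for `D₁, D₂ ∈ [0,1]` with `R(D₁) < ∞` and `R(D₂) < ∞` and `λ ∈ [0,1]`,
`R(λ·D₁ + (1−λ)·D₂) ≤ λ·R(D₁) + (1−λ)·R(D₂)`. -/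
theorem RDfun_convexOn {X : Type*} [Fintype X] [Nonempty X] {N : ℕ} (hN : 1 ≤ N)
    (p : FinPMF (X × Fin N)) :
    ∀ D₁ D₂ lam : ℝ, D₁ ∈ Set.Icc (0:ℝ) 1 → D₂ ∈ Set.Icc (0:ℝ) 1 →
      RDfun p D₁ < ⊤ → RDfun p D₂ < ⊤ → lam ∈ Set.Icc (0:ℝ) 1 →
      RDfun p (lam * D₁ + (1 - lam) * D₂) ≤
        ENNReal.ofReal lam * RDfun p D₁ + ENNReal.ofReal (1 - lam) * RDfun p D₂ := by
  intro D₁ D₂ lam hD₁ hD₂ hf₁ hf₂ hlam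
  obtain ⟨hl0, hl1⟩ := hlam
  have h1l : (0:ℝ) ≤ 1 - lam := by linarith
  refine ENNReal.le_of_forall_pos_le_add fun ε hε hfin => ?_
  have hε2 : ((ε : ℝ≥0∞) / 2) ≠ 0 := by
    simp [ENNReal.div_eq_zero_iff, hε.ne']
  -- extract near-optimal encoders
  have h₁ : RDfun p D₁ < RDfun p D₁ + (ε : ℝ≥0∞) / 2 :=
    ENNReal.lt_add_right hf₁.ne hε2
  have h₂ : RDfun p D₂ < RDfun p D₂ + (ε : ℝ≥0∞) / 2 :=
    ENNReal.lt_add_right hf₂.ne hε2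
  rw [RDfun] at h₁ h₂
  simp only [iInf_lt_iff] at h₁ h₂
  obtain ⟨k₁, hk₁, e₁, g₁, hd₁, hr₁⟩ := h₁
  obtain ⟨k₂, hk₂, e₂, g₂, hd₂, hr₂⟩ := h₂
  rw [← RDfun] at hr₁ hr₂
  -- the mixed code is feasible for the mixed distortion level
  have hdist : distortion p (mixE lam hl0 hl1 e₁ e₂) (mixG g₁ g₂) ≤
      lam * D₁ + (1 - lam) * D₂ := by
    rw [distortion_mix]
    exact add_le_add (mul_le_mul_of_nonneg_left hd₁ hl0)
      (mul_le_mul_of_nonneg_left hd₂ h1l)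
  have hstep : RDfun p (lam * D₁ + (1 - lam) * D₂) ≤
      ENNReal.ofReal (rate p (mixE lam hl0 hl1 e₁ e₂)) := by
    rw [RDfun]
    exact iInf_le_of_le (k₁ + k₂) (iInf_le_of_le (by omega)
      (iInf_le_of_le (mixE lam hl0 hl1 e₁ e₂) (iInf_le_of_le (mixG g₁ g₂)
      (iInf_le _ hdist))))
  calc RDfun p (lam * D₁ + (1 - lam) * D₂)
      ≤ ENNReal.ofReal (rate p (mixE lam hl0 hl1 e₁ e₂)) := hstep
    _ = ENNReal.ofReal (lam * rate p e₁ + (1 - lam) * rate p e₂) := by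
        rw [rate_mix]
    _ ≤ ENNReal.ofReal (lam * rate p e₁) + ENNReal.ofReal ((1 - lam) * rate p e₂) :=
        ENNReal.ofReal_add_le
    _ = ENNReal.ofReal lam * ENNReal.ofReal (rate p e₁) +
        ENNReal.ofReal (1 - lam) * ENNReal.ofReal (rate p e₂) := by
        rw [ENNReal.ofReal_mul hl0, ENNReal.ofReal_mul h1l]
    _ ≤ ENNReal.ofReal lam * (RDfun p D₁ + (ε : ℝ≥0∞) / 2) +
        ENNReal.ofReal (1 - lam) * (RDfun p D₂ + (ε : ℝ≥0∞) / 2) :=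
        add_le_add (mul_le_mul' le_rfl hr₁.le) (mul_le_mul' le_rfl hr₂.le)
    _ = ENNReal.ofReal lam * RDfun p D₁ + ENNReal.ofReal (1 - lam) * RDfun p D₂ +
        (ENNReal.ofReal lam + ENNReal.ofReal (1 - lam)) * ((ε : ℝ≥0∞) / 2) := by
        ring
    _ = ENNReal.ofReal lam * RDfun p D₁ + ENNReal.ofReal (1 - lam) * RDfun p D₂ +
        (ε : ℝ≥0∞) / 2 := by
        rw [← ENNReal.ofReal_add hl0 h1l]
        norm_num
    _ ≤ ENNReal.ofReal lam * RDfun p D₁ + ENNReal.ofReal (1 - lam) * RDfun p D₂ +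
        (ε : ℝ≥0∞) := add_le_add le_rfl ENNReal.half_le_self

end
end

section
/- Time-sharing identity: let X be a nonempty finite type, p a probability mass function on X, k₁, k₂ ≥ 1, and let e₁, e₂ be Markov kernels from X to probability mass functions on Fin k₁ and Fin k₂ respectively. For λ ∈ [0,1], define the mixture kernel e from X to Fin k₁ ⊕ Fin k₂ by e(inl c | x) := λ·e₁(c|x) and e(inr c | x) := (1−λ)·e₂(c|x). Then the mutual information satisfies I(e) = λ·I(e₁) + (1−λ)·I(e₂), and for every bounded function L : X × (Fin k₁ ⊕ Fin k₂) → ℝ, the expectation Σ_{x,c} p(x)·e(c|x)·L(x,c) equals λ·Σ_{x,c₁} p(x)·e₁(c₁|x)·L(x, inl c₁) + (1−λ)·Σ_{x,c₂} p(x)·e₂(c₂|x)·L(x, inr c₂). -/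
open scoped BigOperators

noncomputable section

/-- Mutual information of a Markov kernel `e : X → 𝒫(C)` with input distribution `p`:
`I(e) = Σ_{x,c} p(x)·e(c|x)·log(e(c|x)/q(c))`, where `q(c) = Σ_x p(x)·e(c|x)`.
(Terms with zero probability vanish, using `Real.log 0 = 0` and multiplication by `0`.) -/
def mutualInfo {X C : Type*} [Fintype X] [Fintype C] (p : X → ℝ) (e : X → C → ℝ) : ℝ :=
  ∑ x, ∑ c, p x * e x c * Real.log (e x c / (∑ x', p x' * e x' c))

/-! Scaling a kernel by `t` scales its output marginal by `t`, leaving the ratios inside the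
logarithm unchanged; and on a disjoint-union codebook the marginal of `inl c` involves only the
first kernel, so mutual information splits into the two summands. -/

theorem mutualInfo_const_mul {X C : Type*} [Fintype X] [Fintype C] (p : X → ℝ)
    (f : X → C → ℝ) (t : ℝ) :
    mutualInfo p (fun x c => t * f x c) = t * mutualInfo p f := by
  rcases eq_or_ne t 0 with rfl | ht
  · simp [mutualInfo]
  simp only [mutualInfo, Finset.mul_sum]
  refine Finset.sum_congr rfl fun x _ => Finset.sum_congr rfl fun c _ => ?_
  have marginal_mul : ∑ x', p x' * (t * f x' c) = t * ∑ x', p x' * f x' c := by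
    rw [Finset.mul_sum]
    exact Finset.sum_congr rfl fun x' _ => by ring
  rw [marginal_mul, mul_div_mul_left _ _ ht]
  ring

theorem mutualInfo_sumElim {X α β : Type*} [Fintype X] [Fintype α] [Fintype β] (p : X → ℝ)
    (f : X → α → ℝ) (g : X → β → ℝ) :
    mutualInfo p (fun x => Sum.elim (f x) (g x)) = mutualInfo p f + mutualInfo p g := by
  simp only [mutualInfo, Fintype.sum_sum_type, Sum.elim_inl, Sum.elim_inr,
    Finset.sum_add_distrib]

theorem time_sharing_general {X : Type*} [Fintype X]
    (p : FinPMF X) (k₁ k₂ : ℕ)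
    (e₁ : X → FinPMF (Fin k₁)) (e₂ : X → FinPMF (Fin k₂))
    (lam : ℝ)
    (e : X → FinPMF (Fin k₁ ⊕ Fin k₂))
    (he₁ : ∀ x c, (e x).val (Sum.inl c) = lam * (e₁ x).val c)
    (he₂ : ∀ x c, (e x).val (Sum.inr c) = (1 - lam) * (e₂ x).val c) :
    mutualInfo p.val (fun x c => (e x).val c)
        = lam * mutualInfo p.val (fun x c => (e₁ x).val c)
          + (1 - lam) * mutualInfo p.val (fun x c => (e₂ x).val c)
    ∧ ∀ L : X × (Fin k₁ ⊕ Fin k₂) → ℝ, (∃ B : ℝ, ∀ z, |L z| ≤ B) →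
        ∑ x, ∑ c, p.val x * (e x).val c * L (x, c)
          = lam * ∑ x, ∑ c₁, p.val x * (e₁ x).val c₁ * L (x, Sum.inl c₁)
            + (1 - lam) * ∑ x, ∑ c₂, p.val x * (e₂ x).val c₂ * L (x, Sum.inr c₂) := by
  have e_eq : (fun x c => (e x).val c) = fun x =>
      Sum.elim (fun c => lam * (e₁ x).val c) (fun c => (1 - lam) * (e₂ x).val c) := by
    funext x c
    cases c <;> simp [he₁, he₂]
  refine ⟨?_, fun L _ => ?_⟩
  · rw [e_eq, mutualInfo_sumElim, mutualInfo_const_mul, mutualInfo_const_mul]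
  · simp only [Fintype.sum_sum_type, he₁, he₂, Finset.sum_add_distrib, Finset.mul_sum]
    congr 1 <;> exact Finset.sum_congr rfl fun _ _ => Finset.sum_congr rfl fun _ _ => by ring

/-- Time-sharing identity.  If `e` is the `λ`-mixture of the kernels
`e₁` and `e₂` on the disjoint-union codebook `Fin k₁ ⊕ Fin k₂`
(`e(inl c|x) = λ·e₁(c|x)` and `e(inr c|x) = (1−λ)·e₂(c|x)`), then
`I(e) = λ·I(e₁) + (1−λ)·I(e₂)`, and the expectation of every bounded loss
`L : X × (Fin k₁ ⊕ Fin k₂) → ℝ` under `(p, e)` is the corresponding `λ`-mixture of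
its expectations under `(p, e₁)` and `(p, e₂)`. -/
theorem time_sharing {X : Type*} [Fintype X] [Nonempty X]
    (p : FinPMF X) (k₁ k₂ : ℕ) (hk₁ : 1 ≤ k₁) (hk₂ : 1 ≤ k₂)
    (e₁ : X → FinPMF (Fin k₁)) (e₂ : X → FinPMF (Fin k₂))
    (lam : ℝ) (hlam : lam ∈ Set.Icc (0:ℝ) 1)
    (e : X → FinPMF (Fin k₁ ⊕ Fin k₂))
    (he₁ : ∀ x c, (e x).val (Sum.inl c) = lam * (e₁ x).val c)
    (he₂ : ∀ x c, (e x).val (Sum.inr c) = (1 - lam) * (e₂ x).val c) :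
    mutualInfo p.val (fun x c => (e x).val c)
        = lam * mutualInfo p.val (fun x c => (e₁ x).val c)
          + (1 - lam) * mutualInfo p.val (fun x c => (e₂ x).val c)
    ∧ ∀ L : X × (Fin k₁ ⊕ Fin k₂) → ℝ, (∃ B : ℝ, ∀ z, |L z| ≤ B) →
        ∑ x, ∑ c, p.val x * (e x).val c * L (x, c)
          = lam * ∑ x, ∑ c₁, p.val x * (e₁ x).val c₁ * L (x, Sum.inl c₁)
            + (1 - lam) * ∑ x, ∑ c₂, p.val x * (e₂ x).val c₂ * L (x, Sum.inr c₂) :=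
  time_sharing_general p k₁ k₂ e₁ e₂ lam e he₁ he₂

end
end

section
/- Ranking Fano bound: let N ≥ 2, let C be a nonempty finite type, and let μ be a probability mass function on (Fin N) × C whose first marginal is uniform on Fin N. Let g : C → Equiv.Perm (Fin N) be a decoder, define the rank of y under a permutation π as rank_π(y) := (π⁻¹(y) : ℕ) + 1, and let D := Σ_{y,c} μ(y,c)·(1 − 1/rank_{g(c)}(y)) be the expected ranking distortion. If D ≤ 1/4, then the mutual information satisfies I(Y;C) ≥ log N − h(2D) − 2D·log(N−1). -/
open scoped BigOperators

noncomputable section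

/-- Mutual information `I(A;B)` of a joint probability mass function `μ` on `A × B`:
`Σ_{a,b} μ(a,b)·log(μ(a,b)/(μ_A(a)·μ_B(b)))`, terms with `μ(a,b) = 0` being `0`
(automatic since `Real.log 0 = 0` and multiplication by `0`). -/
def miJoint {A B : Type*} [Fintype A] [Fintype B] (μ : A × B → ℝ) : ℝ :=
  ∑ a, ∑ b, μ (a, b) *
    Real.log (μ (a, b) / ((∑ b', μ (a, b')) * (∑ a', μ (a', b))))

/-- The binary entropy function `h(x) = −x·log x − (1−x)·log(1−x)` (natural logarithm;
the convention `0·log 0 = 0` is automatic since `Real.log 0 = 0`). -/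
def binEnt (x : ℝ) : ℝ := -x * Real.log x - (1 - x) * Real.log (1 - x)

lemma gibbs_aux {Z : Type*} [Fintype Z] (p v : Z → ℝ) (hp : ∀ z, 0 ≤ p z)
    (hv : ∀ z, 0 ≤ v z) (hpos : ∀ z, 0 < p z → 0 < v z) :
    ∑ z, p z - ∑ z, v z ≤ ∑ z, p z * Real.log (p z / v z) := by
  rw [← Finset.sum_sub_distrib]
  apply Finset.sum_le_sum
  intro z _
  rcases eq_or_lt_of_le (hp z) with h | h
  · simp [← h, hv z]
  · have hvz := hpos z h
    have hlog := Real.log_le_sub_one_of_pos (show (0:ℝ) < v z / p z from div_pos hvz h)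
    have hld : Real.log (v z / p z) = - Real.log (p z / v z) := by
      rw [← Real.log_inv]; congr 1; field_simp
    rw [hld] at hlog
    have h2 := mul_le_mul_of_nonneg_left hlog h.le
    have h3 : p z * (v z / p z - 1) = v z - p z := by field_simp
    rw [h3] at h2
    linarith

/-- Ranking Fano bound.  Let `μ` be a joint pmf on `Fin N × C`
(`N ≥ 2`) whose first marginal is uniform, let `g : C → Equiv.Perm (Fin N)` be a
decoder, and let `D` be the expected ranking distortion, where the rank of `y`
under `π` is `(π⁻¹ y : ℕ) + 1`.  If `D ≤ 1/4`, then
`I(Y;C) ≥ log N − h(2D) − 2D·log(N−1)`. -/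
theorem ranking_fano (N : ℕ) (hN : 2 ≤ N) (C : Type*) [Fintype C] [Nonempty C]
    (μ : Fin N × C → ℝ) (hnn : ∀ z, 0 ≤ μ z) (hsum : ∑ z, μ z = 1)
    (hunif : ∀ y : Fin N, ∑ c, μ (y, c) = 1 / (N : ℝ))
    (g : C → Equiv.Perm (Fin N)) (D : ℝ)
    (hD : D = ∑ y, ∑ c, μ (y, c) * (1 - 1 / ((((g c)⁻¹ y : Fin N) : ℕ) + 1 : ℝ)))
    (hD4 : D ≤ 1 / 4) :
    Real.log N - binEnt (2 * D) - 2 * D * Real.log ((N : ℝ) - 1) ≤ miJoint μ := by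
  haveI : NeZero N := ⟨by omega⟩
  have hNpos : (0:ℝ) < (N:ℝ) := by positivity
  have hN1 : (1:ℝ) ≤ (N:ℝ) - 1 := by
    have : (2:ℝ) ≤ (N:ℝ) := by exact_mod_cast hN
    linarith
  set L : ℝ := 2 * D with hLdef
  -- distortion function
  set d : Fin N × C → ℝ := fun z => 1 - 1 / ((((g z.2)⁻¹ z.1 : Fin N) : ℕ) + 1 : ℝ) with hddef
  have hD' : D = ∑ z : Fin N × C, μ z * d z := by
    rw [hD, Fintype.sum_prod_type]
  have hd0 : ∀ z, 0 ≤ d z := by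
    intro z
    have h1 : (1:ℝ) ≤ (((g z.2)⁻¹ z.1 : Fin N) : ℕ) + 1 := by
      have := Nat.cast_nonneg (α := ℝ) (((g z.2)⁻¹ z.1 : Fin N) : ℕ); linarith
    have : 1 / ((((g z.2)⁻¹ z.1 : Fin N) : ℕ) + 1 : ℝ) ≤ 1 := by
      rw [div_le_one (by positivity)]; exact h1
    simp only [hddef]; linarith
  have hD0 : 0 ≤ D := by
    rw [hD']
    exact Finset.sum_nonneg fun z _ => mul_nonneg (hnn z) (hd0 z)
  have hL0 : 0 ≤ L := by simp [hLdef]; linarith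
  have hLhalf : L ≤ 1/2 := by simp only [hLdef]; linarith
  -- error probability
  set pind : Fin N × C → ℝ := fun z => if z.1 = g z.2 0 then 0 else μ z with hpinddef
  set P : ℝ := ∑ z : Fin N × C, pind z with hPdef
  have hpind0 : ∀ z, 0 ≤ pind z := by
    intro z; simp only [hpinddef]; split
    · exact le_refl 0
    · exact hnn z
  have hP0 : 0 ≤ P := Finset.sum_nonneg fun z _ => hpind0 z
  have hPL : P ≤ L := by
    rw [hPdef, hLdef, hD', Finset.mul_sum]
    apply Finset.sum_le_sum
    intro z _
    by_cases hz : z.1 = g z.2 0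
    · simp only [hpinddef, hz, if_pos rfl]
      exact mul_nonneg (by norm_num) (mul_nonneg (hnn z) (hd0 z))
    · simp only [hpinddef, if_neg hz]
      have hk : 1 ≤ (((g z.2)⁻¹ z.1 : Fin N) : ℕ) := by
        rcases Nat.eq_zero_or_pos (((g z.2)⁻¹ z.1 : Fin N) : ℕ) with h | h
        · exfalso
          apply hz
          have : (g z.2)⁻¹ z.1 = 0 := by
            ext; simpa using h
          have := congrArg (g z.2) this
          simpa using this
        · exact h
      have hk' : (2:ℝ) ≤ (((g z.2)⁻¹ z.1 : Fin N) : ℕ) + 1 := by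
        have : (1:ℝ) ≤ ((((g z.2)⁻¹ z.1 : Fin N) : ℕ) : ℝ) := by exact_mod_cast hk
        linarith
      have hdz : (1:ℝ)/2 ≤ d z := by
        simp only [hddef]
        have h12 : 1 / ((((g z.2)⁻¹ z.1 : Fin N) : ℕ) + 1 : ℝ) ≤ 1/2 :=
          one_div_le_one_div_of_le (by norm_num) hk'
        linarith
      have hfin := mul_le_mul_of_nonneg_left hdz (hnn z)
      calc μ z = 2 * (μ z * (1/2)) := by ring
        _ ≤ 2 * (μ z * d z) := mul_le_mul_of_nonneg_left hfin (by norm_num)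
  -- marginal on C
  set q : C → ℝ := fun c => ∑ y, μ (y, c) with hqdef
  have hq0 : ∀ c, 0 ≤ q c := fun c => Finset.sum_nonneg fun y _ => hnn _
  have hq1 : ∑ c, q c = 1 := by
    rw [← hsum, Fintype.sum_prod_type_right]
  have hμq : ∀ z : Fin N × C, μ z ≤ q z.2 := fun z =>
    Finset.single_le_sum (f := fun y => μ (y, z.2)) (fun y _ => hnn (y, z.2))
      (Finset.mem_univ z.1)
  have hNsub : (0:ℝ) < (N:ℝ) - 1 := by linarith
  -- reference kernel
  set r : Fin N × C → ℝ := fun z => if z.1 = g z.2 0 then 1 - L else L / ((N:ℝ) - 1)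
    with hrdef
  have hr0 : ∀ z, 0 ≤ r z := by
    intro z; simp only [hrdef]
    split
    · linarith
    · positivity
  have hr1 : ∀ c : C, ∑ y : Fin N, r (y, c) = 1 := by
    intro c
    have hre : ∀ y : Fin N,
        r (y, c) = (if y = g c 0 then (1 - L) - L/((N:ℝ)-1) else 0) + L/((N:ℝ)-1) := by
      intro y; simp only [hrdef]; split <;> ring
    simp_rw [hre]
    rw [Finset.sum_add_distrib, Finset.sum_ite_eq' Finset.univ (g c 0)
      (fun _ => (1 - L) - L/((N:ℝ)-1)), Finset.sum_const, Finset.card_univ,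
      Fintype.card_fin, if_pos (Finset.mem_univ _), nsmul_eq_mul]
    field_simp
    ring
  set v : Fin N × C → ℝ := fun z => q z.2 * r z with hvdef
  have hv0 : ∀ z, 0 ≤ v z := fun z => mul_nonneg (hq0 _) (hr0 _)
  have hv1 : ∑ z : Fin N × C, v z = 1 := by
    rw [Fintype.sum_prod_type_right]
    simp_rw [hvdef, ← Finset.mul_sum]
    simp_rw [hr1]
    simpa using hq1
  have hpos : ∀ z, 0 < μ z → 0 < v z := by
    intro z hz
    have hqz : 0 < q z.2 := lt_of_lt_of_le hz (hμq z)
    apply mul_pos hqz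
    simp only [hrdef]
    split
    · linarith
    · rename_i hne
      have hPz : pind z ≤ P := Finset.single_le_sum (fun i _ => hpind0 i) (Finset.mem_univ z)
      have : 0 < pind z := by simp only [hpinddef, if_neg hne]; exact hz
      have hLpos : 0 < L := lt_of_lt_of_le (lt_of_lt_of_le this hPz) hPL
      positivity
  -- Gibbs inequality
  have hgibbs : (0:ℝ) ≤ ∑ z : Fin N × C, μ z * Real.log (μ z / v z) := by
    have := gibbs_aux μ v hnn hv0 hpos
    rw [hsum, hv1] at this
    linarith
  -- rewrite mutual information
  have hmi : miJoint μ = ∑ z : Fin N × C, μ z * Real.log (μ z / ((1/(N:ℝ)) * q z.2)) := by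
    unfold miJoint
    conv_rhs => rw [Fintype.sum_prod_type]
    apply Finset.sum_congr rfl
    intro y _
    apply Finset.sum_congr rfl
    intro c _
    rw [hunif y]
  -- pointwise decomposition
  have hsplit : ∀ z : Fin N × C, μ z * Real.log (μ z / ((1/(N:ℝ)) * q z.2)) =
      μ z * Real.log (μ z / v z) + (μ z - pind z) * Real.log ((N:ℝ)*(1 - L))
        + pind z * Real.log ((N:ℝ)*L/((N:ℝ)-1)) := by
    intro z
    rcases eq_or_lt_of_le (hnn z) with h0 | h0
    · have hp0 : pind z = 0 := by simp only [hpinddef]; split <;> simp [← h0]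
      simp [← h0, hp0]
    · have hqz : 0 < q z.2 := lt_of_lt_of_le h0 (hμq z)
      by_cases hz : z.1 = g z.2 0
      · have hrz : r z = 1 - L := by simp [hrdef, hz]
        have hL1 : 0 < 1 - L := by linarith
        have hvz : v z = q z.2 * (1 - L) := by simp only [hvdef]; rw [hrz]
        have hvpos : 0 < v z := by rw [hvz]; exact mul_pos hqz hL1
        have harg : μ z / ((1/(N:ℝ)) * q z.2) = (μ z / v z) * ((N:ℝ)*(1-L)) := by
          rw [hvz]; field_simp
        have hp0 : pind z = 0 := by simp only [hpinddef, if_pos hz]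
        rw [harg, Real.log_mul (ne_of_gt (div_pos h0 hvpos)) (by positivity), hp0]
        ring
      · have hp0 : pind z = μ z := by simp only [hpinddef, if_neg hz]
        have hPz : pind z ≤ P := Finset.single_le_sum (fun i _ => hpind0 i) (Finset.mem_univ z)
        have hLpos : 0 < L := by rw [hp0] at hPz; linarith
        have hrz : r z = L / ((N:ℝ)-1) := by simp [hrdef, hz]
        have hvz : v z = q z.2 * (L / ((N:ℝ)-1)) := by simp only [hvdef]; rw [hrz]
        have hvpos : 0 < v z := by rw [hvz]; exact mul_pos hqz (div_pos hLpos hNsub)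
        have harg : μ z / ((1/(N:ℝ)) * q z.2) = (μ z / v z) * ((N:ℝ)*L/((N:ℝ)-1)) := by
          rw [hvz]; field_simp
        rw [harg, Real.log_mul (ne_of_gt (div_pos h0 hvpos)) (by positivity), hp0]
        ring
  have hsum2 : miJoint μ = (∑ z : Fin N × C, μ z * Real.log (μ z / v z))
      + (1 - P) * Real.log ((N:ℝ)*(1 - L)) + P * Real.log ((N:ℝ)*L/((N:ℝ)-1)) := by
    rw [hmi]
    simp_rw [hsplit]
    rw [Finset.sum_add_distrib, Finset.sum_add_distrib, ← Finset.sum_mul, ← Finset.sum_mul,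
      Finset.sum_sub_distrib, hsum, ← hPdef]
  have hlow : (1 - P) * Real.log ((N:ℝ)*(1 - L)) + P * Real.log ((N:ℝ)*L/((N:ℝ)-1))
      ≤ miJoint μ := by
    rw [hsum2]; linarith
  -- final log algebra
  rcases eq_or_lt_of_le hL0 with hLz | hLpos
  · have hPz : P = 0 := le_antisymm (hPL.trans hLz.symm.le) hP0
    rw [hPz, ← hLz] at hlow
    rw [← hLz]
    simp only [binEnt]
    norm_num at hlow ⊢
    linarith [hlow]
  · have hL1 : 0 < 1 - L := by linarith
    have hlog1 : Real.log ((N:ℝ)*(1-L)) = Real.log N + Real.log (1-L) :=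
      Real.log_mul hNpos.ne' hL1.ne'
    have hlog2 : Real.log ((N:ℝ)*L/((N:ℝ)-1))
        = Real.log N + Real.log L - Real.log ((N:ℝ)-1) := by
      rw [Real.log_div (by positivity) hNsub.ne', Real.log_mul hNpos.ne' hLpos.ne']
    have hmono : Real.log L ≤ Real.log (1 - L) :=
      Real.log_le_log hLpos (by linarith)
    have hlogN1 : 0 ≤ Real.log ((N:ℝ)-1) := Real.log_nonneg hN1
    rw [hlog1, hlog2] at hlow
    simp only [binEnt]
    have key : 0 ≤ (L - P) * (Real.log (1-L) - Real.log L + Real.log ((N:ℝ)-1)) :=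
      mul_nonneg (sub_nonneg.mpr hPL) (by linarith)
    linarith [key, hlow]


end
end

section
/- Data-processing step of the converse: let 𝒳, 𝒴, 𝒞 be nonempty finite types, let p be a probability mass function on 𝒳 × 𝒴, and let e be a Markov kernel assigning to each x : 𝒳 a probability mass function e(·|x) on 𝒞. Define the joint probability mass function ν on 𝒳 × 𝒴 × 𝒞 by ν(x,y,c) := p(x,y)·e(c|x). Then the mutual information between Y and C is at most the mutual information between X and C: I(Y;C) ≤ I(X;C), where both are computed from the corresponding two-dimensional marginals of ν. -/
open scoped BigOperators

noncomputable section

private lemma gibbs {ι : Type*} [Fintype ι] (ν m : ι → ℝ) (hν : ∀ i, 0 ≤ ν i)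
    (hm : ∀ i, 0 ≤ m i) (hpos : ∀ i, 0 < ν i → 0 < m i)
    (hνs : ∑ i, ν i = 1) (hms : ∑ i, m i ≤ 1) :
    0 ≤ ∑ i, ν i * Real.log (ν i / m i) := by
  have key : ∀ i ∈ Finset.univ, ν i - m i ≤ ν i * Real.log (ν i / m i) := by
    intro i _
    rcases (hν i).eq_or_lt with h | h
    · rw [← h]; simpa using hm i
    · have hmi := hpos i h
      have hlog : Real.log (m i / ν i) ≤ m i / ν i - 1 :=
        Real.log_le_sub_one_of_pos (div_pos hmi h)
      have hrw : Real.log (ν i / m i) = - Real.log (m i / ν i) := by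
        rw [← Real.log_inv, inv_div]
      rw [hrw]
      have h2 : ν i * (m i / ν i) = m i := by field_simp
      nlinarith
  have h := Finset.sum_le_sum key
  rw [Finset.sum_sub_distrib, hνs] at h
  linarith

/-- Data-processing step of the converse.  Let `p` be a joint pmf on
`𝒳 × 𝒴` and `e` a Markov kernel from `𝒳` to `𝒞`; form the joint law
`ν(x,y,c) = p(x,y)·e(c|x)`.  Then the mutual information between `Y` and `C`
(computed from the `(y,c)`-marginal of `ν`) is at most that between `X` and `C`
(computed from the `(x,c)`-marginal of `ν`). -/
theorem data_processing {𝒳 𝒴 𝒞 : Type*} [Fintype 𝒳] [Fintype 𝒴] [Fintype 𝒞]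
    [Nonempty 𝒳] [Nonempty 𝒴] [Nonempty 𝒞]
    (p : 𝒳 × 𝒴 → ℝ) (hp : ∀ z, 0 ≤ p z) (hpsum : ∑ z, p z = 1)
    (e : 𝒳 → 𝒞 → ℝ) (he : ∀ x c, 0 ≤ e x c) (hesum : ∀ x, ∑ c, e x c = 1) :
    miJoint (fun yc : 𝒴 × 𝒞 => ∑ x, p (x, yc.1) * e x yc.2)
      ≤ miJoint (fun xc : 𝒳 × 𝒞 => ∑ y, p (xc.1, y) * e xc.1 xc.2) := by
  classical
  set pX : 𝒳 → ℝ := fun x => ∑ y, p (x, y) with hpX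
  set pY : 𝒴 → ℝ := fun y => ∑ x, p (x, y) with hpY
  set q : 𝒞 → ℝ := fun c => ∑ x, pX x * e x c with hq
  set r : 𝒴 → 𝒞 → ℝ := fun y c => ∑ x, p (x, y) * e x c with hr
  -- basic nonnegativity
  have hpXnn : ∀ x, 0 ≤ pX x := fun x => Finset.sum_nonneg fun y _ => hp _
  have hpYnn : ∀ y, 0 ≤ pY y := fun y => Finset.sum_nonneg fun x _ => hp _
  have hqnn : ∀ c, 0 ≤ q c := fun c =>
    Finset.sum_nonneg fun x _ => mul_nonneg (hpXnn x) (he x c)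
  have hrnn : ∀ y c, 0 ≤ r y c := fun y c =>
    Finset.sum_nonneg fun x _ => mul_nonneg (hp _) (he x c)
  -- sum of p over product = 1 in iterated form
  have hpsum' : ∑ x, ∑ y, p (x, y) = 1 := by
    rw [← hpsum, ← Fintype.sum_prod_type]
  -- r marginals
  have hrC : ∀ y, ∑ c, r y c = pY y := by
    intro y
    rw [Finset.sum_comm]
    simp only [← Finset.mul_sum, hesum, mul_one]
    rfl
  have hrY : ∀ c, ∑ y, r y c = q c := by
    intro c
    rw [Finset.sum_comm]
    simp only [hq, hpX, Finset.sum_mul]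
  -- rewrite I(X;C)
  have hXC : miJoint (fun xc : 𝒳 × 𝒞 => ∑ y, p (xc.1, y) * e xc.1 xc.2)
      = ∑ x, ∑ y, ∑ c, p (x, y) * e x c *
          Real.log ((pX x * e x c) / (pX x * q c)) := by
    unfold miJoint
    refine Finset.sum_congr rfl fun x _ => ?_
    calc (∑ c, (∑ y, p (x, y) * e x c) *
          Real.log ((∑ y, p (x, y) * e x c) /
            ((∑ c', ∑ y, p (x, y) * e x c') * (∑ x', ∑ y, p (x', y) * e x' c))))
        = ∑ c, ∑ y, p (x, y) * e x c *
            Real.log ((pX x * e x c) / (pX x * q c)) := by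
          refine Finset.sum_congr rfl fun c _ => ?_
          have h1 : ∀ x', (∑ y, p (x', y) * e x' c) = pX x' * e x' c := by
            intro x'; rw [← Finset.sum_mul]
          have h2 : (∑ c', ∑ y, p (x, y) * e x c') = pX x := by
            rw [Finset.sum_comm]
            simp only [← Finset.mul_sum, hesum, mul_one]
            rfl
          have h3 : (∑ x', ∑ y, p (x', y) * e x' c) = q c := by
            simp only [h1]
            rfl
          rw [h1 x, h2, h3]
          simp only [hpX, Finset.sum_mul]
      _ = _ := Finset.sum_comm
  -- rewrite I(Y;C)
  have hYC : miJoint (fun yc : 𝒴 × 𝒞 => ∑ x, p (x, yc.1) * e x yc.2)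
      = ∑ x, ∑ y, ∑ c, p (x, y) * e x c *
          Real.log (r y c / (pY y * q c)) := by
    unfold miJoint
    calc (∑ y, ∑ c, (∑ x, p (x, y) * e x c) *
          Real.log ((∑ x, p (x, y) * e x c) /
            ((∑ c', ∑ x, p (x, y) * e x c') * (∑ y', ∑ x, p (x, y') * e x c))))
        = ∑ y, ∑ c, ∑ x, p (x, y) * e x c * Real.log (r y c / (pY y * q c)) := by
          refine Finset.sum_congr rfl fun y _ => Finset.sum_congr rfl fun c _ => ?_
          rw [show (∑ c', ∑ x, p (x, y) * e x c') = pY y from hrC y,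
              show (∑ y', ∑ x, p (x, y') * e x c) = q c from hrY c,
              show (∑ x, p (x, y) * e x c) = r y c from rfl,
              Finset.sum_mul]
      _ = ∑ y, ∑ x, ∑ c, p (x, y) * e x c * Real.log (r y c / (pY y * q c)) := by
          exact Finset.sum_congr rfl fun y _ => Finset.sum_comm
      _ = _ := Finset.sum_comm
  rw [hXC, hYC]
  -- reduce to Gibbs on triples
  rw [← sub_nonneg]
  have hident : (∑ x, ∑ y, ∑ c, p (x, y) * e x c *
          Real.log ((pX x * e x c) / (pX x * q c)))
      - (∑ x, ∑ y, ∑ c, p (x, y) * e x c * Real.log (r y c / (pY y * q c)))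
      = ∑ i : 𝒳 × 𝒴 × 𝒞, (p (i.1, i.2.1) * e i.1 i.2.2) *
          Real.log ((p (i.1, i.2.1) * e i.1 i.2.2) /
            (p (i.1, i.2.1) * (r i.2.1 i.2.2 / pY i.2.1))) := by
    rw [Fintype.sum_prod_type]
    simp only [Fintype.sum_prod_type]
    rw [← Finset.sum_sub_distrib]
    refine Finset.sum_congr rfl fun x _ => ?_
    rw [← Finset.sum_sub_distrib]
    refine Finset.sum_congr rfl fun y _ => ?_
    rw [← Finset.sum_sub_distrib]
    refine Finset.sum_congr rfl fun c _ => ?_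
    rcases eq_or_lt_of_le (mul_nonneg (hp (x, y)) (he x c)) with hz | hz
    · rw [← hz]; ring
    · -- positive case: log arithmetic
      have hpz : 0 < p (x, y) := by
        rcases (hp (x, y)).eq_or_lt with h | h
        · exfalso; rw [← h] at hz; simpa using hz
        · exact h
      have hez : 0 < e x c := by
        rcases (he x c).eq_or_lt with h | h
        · exfalso; rw [← h] at hz; simpa using hz
        · exact h
      have hpXz : 0 < pX x := lt_of_lt_of_le hpz
        (Finset.single_le_sum (fun y' _ => hp (x, y')) (Finset.mem_univ y))
      have hpYz : 0 < pY y := lt_of_lt_of_le hpz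
        (Finset.single_le_sum (fun x' _ => hp (x', y)) (Finset.mem_univ x))
      have hqz : 0 < q c := lt_of_lt_of_le (mul_pos hpXz hez)
        (Finset.single_le_sum (fun x' _ => mul_nonneg (hpXnn x') (he x' c))
          (Finset.mem_univ x))
      have hrz : 0 < r y c := lt_of_lt_of_le hz
        (Finset.single_le_sum (fun x' _ => mul_nonneg (hp (x', y)) (he x' c))
          (Finset.mem_univ x))
      have hA : Real.log (pX x * e x c / (pX x * q c))
          = Real.log (e x c) - Real.log (q c) := by
        rw [Real.log_div (by positivity) (by positivity),
            Real.log_mul (ne_of_gt hpXz) (ne_of_gt hez),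
            Real.log_mul (ne_of_gt hpXz) (ne_of_gt hqz)]
        ring
      have hB : Real.log (r y c / (pY y * q c))
          = Real.log (r y c) - Real.log (pY y) - Real.log (q c) := by
        rw [Real.log_div (ne_of_gt hrz) (by positivity),
            Real.log_mul (ne_of_gt hpYz) (ne_of_gt hqz)]
        ring
      have hD : (p (x, y) * e x c) / (p (x, y) * (r y c / pY y))
          = e x c * pY y / r y c := by
        have e1 : p (x, y) ≠ 0 := ne_of_gt hpz
        have e2 : pY y ≠ 0 := ne_of_gt hpYz
        have e3 : r y c ≠ 0 := ne_of_gt hrz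
        first
          | (field_simp; ring)
          | field_simp
      have hC : Real.log (e x c * pY y / r y c)
          = Real.log (e x c) + Real.log (pY y) - Real.log (r y c) := by
        rw [Real.log_div (by positivity) (ne_of_gt hrz),
            Real.log_mul (ne_of_gt hez) (ne_of_gt hpYz)]
        try ring
      rw [hA, hB, hD, hC]
      try ring
  rw [hident]
  -- apply Gibbs
  refine gibbs (fun i : 𝒳 × 𝒴 × 𝒞 => p (i.1, i.2.1) * e i.1 i.2.2)
    (fun i : 𝒳 × 𝒴 × 𝒞 => p (i.1, i.2.1) * (r i.2.1 i.2.2 / pY i.2.1))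
    (fun i => mul_nonneg (hp _) (he _ _))
    (fun i => mul_nonneg (hp _) (div_nonneg (hrnn _ _) (hpYnn _)))
    ?_ ?_ ?_
  · rintro ⟨x, y, c⟩ hν
    have hν' : 0 < p (x, y) * e x c := hν
    have hpz : 0 < p (x, y) := by
      rcases (hp (x, y)).eq_or_lt with h | h
      · exfalso; rw [← h] at hν'; simp at hν'
      · exact h
    have hez : 0 < e x c := by
      rcases (he x c).eq_or_lt with h | h
      · exfalso; rw [← h] at hν'; simp at hν'
      · exact h
    have hpYz : 0 < pY y := lt_of_lt_of_le hpz
      (Finset.single_le_sum (fun x' _ => hp (x', y)) (Finset.mem_univ x))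
    have hrz : 0 < r y c := lt_of_lt_of_le (mul_pos hpz hez)
      (Finset.single_le_sum (fun x' _ => mul_nonneg (hp (x', y)) (he x' c))
        (Finset.mem_univ x))
    exact mul_pos hpz (div_pos hrz hpYz)
  · -- sum of ν = 1
    rw [Fintype.sum_prod_type]
    simp only [Fintype.sum_prod_type]
    calc ∑ x, ∑ y, ∑ c, p (x, y) * e x c
        = ∑ x, ∑ y, p (x, y) := by
          refine Finset.sum_congr rfl fun x _ => Finset.sum_congr rfl fun y _ => ?_
          rw [← Finset.mul_sum, hesum, mul_one]
      _ = 1 := hpsum'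
  · -- sum of m ≤ 1
    rw [Fintype.sum_prod_type]
    simp only [Fintype.sum_prod_type]
    have hswap : (∑ x, ∑ y, ∑ c, p (x, y) * (r y c / pY y))
        = ∑ y, ∑ x, ∑ c, p (x, y) * (r y c / pY y) := Finset.sum_comm
    rw [hswap]
    have step : ∀ y, (∑ x, ∑ c, p (x, y) * (r y c / pY y)) ≤ pY y := by
      intro y
      rcases (hpYnn y).eq_or_lt with h0 | h0
      · have hz : ∀ x, p (x, y) = 0 := by
          intro x
          have := (Finset.sum_eq_zero_iff_of_nonneg
            (fun x' (_ : x' ∈ Finset.univ) => hp (x', y))).mp h0.symm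
          exact this x (Finset.mem_univ x)
        simp [hz, ← h0]
      · have : (∑ x, ∑ c, p (x, y) * (r y c / pY y)) = pY y := by
          calc (∑ x, ∑ c, p (x, y) * (r y c / pY y))
              = ∑ x, p (x, y) * (∑ c, r y c / pY y) := by
                refine Finset.sum_congr rfl fun x _ => ?_
                rw [Finset.mul_sum]
            _ = ∑ x, p (x, y) * (pY y / pY y) := by
                refine Finset.sum_congr rfl fun x _ => ?_
                rw [← Finset.sum_div, hrC]
            _ = ∑ x, p (x, y) := by
                rw [div_self (ne_of_gt h0)]; simp
            _ = pY y := rfl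
        linarith
    calc (∑ y, ∑ x, ∑ c, p (x, y) * (r y c / pY y))
        ≤ ∑ y, pY y := Finset.sum_le_sum fun y _ => step y
      _ = 1 := by rw [hpY]; rw [Finset.sum_comm]; exact hpsum'


end
end

section
/- Zero-rate region of the rate–distortion function: in the finite rate–distortion retrieval setup, suppose additionally that the Fin N-marginal of p is uniform, i.e. p_Y(y) = 1/N for every y. Then for every D ≥ 1 − (1/N)·Σ_{k=1}^{N} (1/k), one has R(D) = 0. -/
open scoped BigOperators ENNReal

noncomputable section

/-- Zero-rate region: if the `Fin N`-marginal of `p` is uniform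
(`p_Y(y) = 1/N` for all `y`), then `R(D) = 0` for every
`D ≥ 1 − (1/N)·Σ_{k=1}^{N} (1/k)`. -/
theorem RDfun_eq_zero {X : Type*} [Fintype X] [Nonempty X] {N : ℕ} (hN : 1 ≤ N)
    (p : FinPMF (X × Fin N))
    (hunif : ∀ y : Fin N, ∑ x, p.val (x, y) = 1 / (N : ℝ)) :
    ∀ D : ℝ, 1 - (1 / (N : ℝ)) * ∑ k ∈ Finset.range N, 1 / ((k : ℝ) + 1) ≤ D →
      RDfun p D = 0 := by
  intro D hD
  have hsum : ∑ x, ∑ y, p.val (x, y) = 1 := by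
    rw [← Fintype.sum_prod_type]; exact p.sum_one
  set e : X → FinPMF (Fin 1) := fun _ => ⟨fun _ => 1, fun _ => zero_le_one, by simp⟩
  set g : Fin 1 → Equiv.Perm (Fin N) := fun _ => 1
  have hrate : rate p e = 0 := by
    unfold rate
    apply Finset.sum_eq_zero; intro x _
    apply Finset.sum_eq_zero; intro c _
    simp [e, hsum]
  have hdist : distortion p e g ≤ D := by
    have : distortion p e g =
        1 - (1 / (N : ℝ)) * ∑ k ∈ Finset.range N, 1 / ((k : ℝ) + 1) := by
      unfold distortion
      have h1 : ∀ x, ∑ y : Fin N, ∑ c : Fin 1, p.val (x, y) * (e x).val c *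
          (1 - 1 / ((((g c)⁻¹ y : Fin N) : ℕ) + 1 : ℝ)) =
          ∑ y : Fin N, p.val (x, y) * (1 - 1 / ((y : ℕ) + 1 : ℝ)) := by
        intro x
        apply Finset.sum_congr rfl; intro y _
        simp [e, g]
      simp only [h1]
      rw [Finset.sum_comm]
      have h2 : ∀ y : Fin N, ∑ x, p.val (x, y) * (1 - 1 / ((y : ℕ) + 1 : ℝ)) =
          (1 / (N : ℝ)) * (1 - 1 / ((y : ℕ) + 1 : ℝ)) := by
        intro y
        rw [← Finset.sum_mul, hunif]
      simp only [h2]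
      rw [← Finset.mul_sum, Fin.sum_univ_eq_sum_range (fun i => 1 - 1 / ((i : ℝ) + 1))]
      have hNpos : (0 : ℝ) < N := by exact_mod_cast hN
      rw [Finset.sum_sub_distrib, Finset.sum_const, Finset.card_range]
      field_simp
      rw [nsmul_eq_mul, mul_one]
    linarith
  have hle : RDfun p D ≤ ENNReal.ofReal (rate p e) := by
    unfold RDfun
    exact le_trans (iInf_le _ 1) (le_trans (iInf_le _ le_rfl)
      (le_trans (iInf_le _ e) (le_trans (iInf_le _ g) (iInf_le _ hdist))))
  rw [hrate] at hle
  simpa using le_antisymm (by simpa using hle) zero_le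

end
end

section
/- Rademacher complexity of a finite loss class (complexity of product quantisers): let z₁,…,zₙ be points in a set Z with n ≥ 1, let K ≥ 1 and D_max ≥ 1 be natural numbers, and let ℒ be a finite nonempty family of functions from Z to [0,1] with cardinality |ℒ| ≤ K·D_max. Then the empirical Rademacher complexity satisfies R̂_n(ℒ; z₁,…,zₙ) ≤ √(2/n)·(√(log K) + √(log D_max)). -/
open scoped BigOperators

noncomputable section

/-- Empirical Rademacher complexity of a finite nonempty family `L` of real-valued
functions at sample points `z₁,…,zₙ`:
`R̂ₙ(L) = 2^{−n} · Σ_{σ ∈ {−1,1}^n} max_{ℓ ∈ L} (1/n) · Σᵢ σᵢ · ℓ(zᵢ)`,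
where sign vectors `σ ∈ {−1,1}^n` are encoded by `σ : Fin n → Bool`. -/
def empRademacher {Z : Type*} (n : ℕ) (z : Fin n → Z)
    (L : Finset (Z → ℝ)) (hL : L.Nonempty) : ℝ :=
  (1 / 2 ^ n) * ∑ σ : Fin n → Bool,
    L.sup' hL (fun ℓ => (1 / (n : ℝ)) * ∑ i, (if σ i then (1 : ℝ) else -1) * ℓ (z i))

private lemma two_cosh_le {x s : ℝ} (hx : x ^ 2 ≤ s) :
    Real.exp x + Real.exp (-x) ≤ 2 * Real.exp (s / 2) := by
  have h := Real.cosh_le_exp_half_sq x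
  rw [Real.cosh_eq] at h
  have h2 : Real.exp (x ^ 2 / 2) ≤ Real.exp (s / 2) :=
    Real.exp_le_exp.mpr (by linarith)
  linarith

private lemma sqrt_add_le' {a b : ℝ} (ha : 0 ≤ a) (hb : 0 ≤ b) :
    Real.sqrt (a + b) ≤ Real.sqrt a + Real.sqrt b := by
  rw [← Real.sqrt_sq (by positivity : (0:ℝ) ≤ Real.sqrt a + Real.sqrt b)]
  apply Real.sqrt_le_sqrt
  have h1 := Real.sq_sqrt ha
  have h2 := Real.sq_sqrt hb
  have h3 := Real.sqrt_nonneg a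
  have h4 := Real.sqrt_nonneg b
  nlinarith

private lemma sum_pi_bool {n : ℕ} (g : Fin n → Bool → ℝ) :
    ∑ σ : Fin n → Bool, ∏ i, g i (σ i) = ∏ i, (g i true + g i false) := by
  have h := Finset.prod_univ_sum (fun _ : Fin n => (Finset.univ : Finset Bool)) g
  rw [Fintype.piFinset_univ] at h
  rw [← h]
  exact Finset.prod_congr rfl fun i _ => by rw [Fintype.sum_bool]

/-- MGF bound for a Rademacher sum with coefficients in `[0,1]`. -/
private lemma expsum_bound {n : ℕ} (l : ℝ) (a : Fin n → ℝ)
    (ha : ∀ i, a i ∈ Set.Icc (0:ℝ) 1) :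
    ∑ σ : Fin n → Bool, Real.exp (l * ∑ i, (if σ i then (1:ℝ) else -1) * a i)
      ≤ 2 ^ n * Real.exp (n * l ^ 2 / 2) := by
  calc ∑ σ : Fin n → Bool, Real.exp (l * ∑ i, (if σ i then (1:ℝ) else -1) * a i)
      = ∑ σ : Fin n → Bool, ∏ i, Real.exp (l * ((if σ i then (1:ℝ) else -1) * a i)) := by
        refine Finset.sum_congr rfl fun σ _ => ?_
        rw [Finset.mul_sum, Real.exp_sum]
    _ = ∏ i, (Real.exp (l * ((if (true:Bool) then (1:ℝ) else -1) * a i))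
          + Real.exp (l * ((if (false:Bool) then (1:ℝ) else -1) * a i))) :=
        sum_pi_bool (fun i b => Real.exp (l * ((if b then (1:ℝ) else -1) * a i)))
    _ ≤ ∏ _i : Fin n, 2 * Real.exp (l ^ 2 / 2) := by
        apply Finset.prod_le_prod
        · intro i _; positivity
        · intro i _
          obtain ⟨h0, h1⟩ := ha i
          show Real.exp (l * (1 * a i)) + Real.exp (l * (-1 * a i))
            ≤ 2 * Real.exp (l ^ 2 / 2)
          have e1 : l * (1 * a i) = l * a i := by ring
          have e2 : l * (-1 * a i) = -(l * a i) := by ring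
          rw [e1, e2]
          have haa : a i ^ 2 ≤ 1 := by nlinarith
          have hsq : (l * a i) ^ 2 ≤ l ^ 2 := by
            calc (l * a i) ^ 2 = l ^ 2 * a i ^ 2 := by ring
              _ ≤ l ^ 2 * 1 := mul_le_mul_of_nonneg_left haa (sq_nonneg l)
              _ = l ^ 2 := by ring
          exact two_cosh_le hsq
    _ = 2 ^ n * Real.exp (n * l ^ 2 / 2) := by
        rw [Finset.prod_const, Finset.card_univ, Fintype.card_fin, mul_pow,
          ← Real.exp_nat_mul]
        ring_nf

private lemma exp_mul_sup'_le_sum {β : Type*} (l : ℝ) (L : Finset β) (hL : L.Nonempty)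
    (f : β → ℝ) :
    Real.exp (l * L.sup' hL f) ≤ ∑ ℓ ∈ L, Real.exp (l * f ℓ) := by
  obtain ⟨ℓ₀, hℓ₀, heq⟩ := Finset.exists_mem_eq_sup' hL f
  rw [heq]
  exact Finset.single_le_sum (f := fun ℓ => Real.exp (l * f ℓ))
    (fun ℓ _ => (Real.exp_pos _).le) hℓ₀

/-- Jensen's inequality for `exp` and the uniform distribution on sign vectors. -/
private lemma jensen_exp {n : ℕ} (F : (Fin n → Bool) → ℝ) :
    Real.exp ((1 / 2 ^ n) * ∑ σ : Fin n → Bool, F σ)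
      ≤ (1 / 2 ^ n) * ∑ σ : Fin n → Bool, Real.exp (F σ) := by
  have hw1 : ∑ _σ : Fin n → Bool, (1 / (2:ℝ) ^ n) = 1 := by
    rw [Finset.sum_const, Finset.card_univ]
    simp [Fintype.card_fun]
  have hjen := convexOn_exp.map_sum_le (t := (Finset.univ : Finset (Fin n → Bool)))
    (w := fun _ => (1 / (2:ℝ) ^ n)) (p := F)
    (fun _ _ => by positivity) hw1 (fun _ _ => Set.mem_univ _)
  simp only [smul_eq_mul] at hjen
  calc Real.exp ((1 / 2 ^ n) * ∑ σ : Fin n → Bool, F σ)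
      = Real.exp (∑ σ : Fin n → Bool, (1 / (2:ℝ)^n) * F σ) := by
        rw [← Finset.mul_sum]
    _ ≤ ∑ σ : Fin n → Bool, (1 / (2:ℝ)^n) * Real.exp (F σ) := hjen
    _ = (1 / 2 ^ n) * ∑ σ : Fin n → Bool, Real.exp (F σ) := by
        rw [Finset.mul_sum]

set_option maxHeartbeats 1000000 in
/-- Massart's finite class lemma (one value of the parameter `l`). -/
private lemma massart {Z : Type*} {n : ℕ} (z : Fin n → Z)
    (L : Finset (Z → ℝ)) (hL : L.Nonempty)
    (hrange : ∀ ℓ ∈ L, ∀ x, ℓ x ∈ Set.Icc (0 : ℝ) 1)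
    (l : ℝ) (hl : 0 < l) :
    (1 / 2 ^ n) * ∑ σ : Fin n → Bool,
        L.sup' hL (fun ℓ => ∑ i, (if σ i then (1:ℝ) else -1) * ℓ (z i))
      ≤ Real.log L.card / l + l * n / 2 := by
  set A : ℝ := (1 / 2 ^ n) * ∑ σ : Fin n → Bool,
    L.sup' hL (fun ℓ => ∑ i, (if σ i then (1:ℝ) else -1) * ℓ (z i)) with hA
  have hchain : Real.exp (l * A) ≤ L.card * Real.exp (n * l ^ 2 / 2) := by
    have hJ := jensen_exp (n := n)
      (fun σ => l * L.sup' hL (fun ℓ => ∑ i, (if σ i then (1:ℝ) else -1) * ℓ (z i)))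
    have hlA : l * A = (1 / 2 ^ n) * ∑ σ : Fin n → Bool,
        (fun σ => l * L.sup' hL
          (fun ℓ => ∑ i, (if σ i then (1:ℝ) else -1) * ℓ (z i))) σ := by
      rw [hA, ← Finset.mul_sum]
      ring
    rw [← hlA] at hJ
    refine hJ.trans ?_
    have hsupb : ∀ σ : Fin n → Bool,
        Real.exp (l * L.sup' hL (fun ℓ => ∑ i, (if σ i then (1:ℝ) else -1) * ℓ (z i)))
        ≤ ∑ ℓ ∈ L, Real.exp (l * ∑ i, (if σ i then (1:ℝ) else -1) * ℓ (z i)) :=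
      fun σ => exp_mul_sup'_le_sum l L hL
        (fun ℓ => ∑ i, (if σ i then (1:ℝ) else -1) * ℓ (z i))
    calc (1 / 2 ^ n) * ∑ σ : Fin n → Bool,
          Real.exp (l * L.sup' hL (fun ℓ => ∑ i, (if σ i then (1:ℝ) else -1) * ℓ (z i)))
        ≤ (1 / 2 ^ n) * ∑ σ : Fin n → Bool, ∑ ℓ ∈ L,
            Real.exp (l * ∑ i, (if σ i then (1:ℝ) else -1) * ℓ (z i)) := by
          apply mul_le_mul_of_nonneg_left _ (by positivity)
          exact Finset.sum_le_sum fun σ _ => hsupb σ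
      _ = (1 / 2 ^ n) * ∑ ℓ ∈ L, ∑ σ : Fin n → Bool,
            Real.exp (l * ∑ i, (if σ i then (1:ℝ) else -1) * ℓ (z i)) := by
          rw [Finset.sum_comm]
      _ ≤ (1 / 2 ^ n) * ∑ _ℓ ∈ L, (2:ℝ) ^ n * Real.exp (n * l ^ 2 / 2) := by
          apply mul_le_mul_of_nonneg_left _ (by positivity)
          refine Finset.sum_le_sum fun ℓ hℓ => ?_
          exact expsum_bound l (fun i => ℓ (z i)) (fun i => hrange ℓ hℓ (z i))
      _ = L.card * Real.exp (n * l ^ 2 / 2) := by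
          rw [Finset.sum_const, nsmul_eq_mul]
          field_simp
  have hM1 : (1:ℝ) ≤ L.card := by exact_mod_cast hL.card_pos
  have hlog : l * A ≤ Real.log L.card + n * l ^ 2 / 2 := by
    have h1 : Real.log (Real.exp (l * A)) ≤
        Real.log (L.card * Real.exp (n * l ^ 2 / 2)) :=
      Real.log_le_log (Real.exp_pos _) hchain
    rw [Real.log_exp, Real.log_mul (by positivity) (Real.exp_ne_zero _),
      Real.log_exp] at h1
    exact h1
  have hA' : A ≤ (Real.log L.card + n * l ^ 2 / 2) / l := by
    rw [le_div_iff₀ hl]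
    nlinarith
  calc A ≤ (Real.log L.card + n * l ^ 2 / 2) / l := hA'
    _ = Real.log L.card / l + l * n / 2 := by field_simp

set_option maxHeartbeats 1000000 in
/-- Rademacher complexity of a finite loss class.  If `L` is a finite
nonempty family of `[0,1]`-valued functions with `|L| ≤ K·D_max` (`K, D_max ≥ 1`), then
`R̂ₙ(L) ≤ √(2/n)·(√(log K) + √(log D_max))`. -/
theorem empRademacher_le {Z : Type*} (n : ℕ) (hn : 1 ≤ n) (z : Fin n → Z)
    (K Dmax : ℕ) (hK : 1 ≤ K) (hDmax : 1 ≤ Dmax)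
    (L : Finset (Z → ℝ)) (hL : L.Nonempty)
    (hrange : ∀ ℓ ∈ L, ∀ x, ℓ x ∈ Set.Icc (0 : ℝ) 1)
    (hcard : L.card ≤ K * Dmax) :
    empRademacher n z L hL ≤
      Real.sqrt (2 / n) * (Real.sqrt (Real.log K) + Real.sqrt (Real.log Dmax)) := by
  have hnpos : (0:ℝ) < n := by exact_mod_cast hn
  set A : ℝ := (1 / 2 ^ n) * ∑ σ : Fin n → Bool,
    L.sup' hL (fun ℓ => ∑ i, (if σ i then (1:ℝ) else -1) * ℓ (z i)) with hA
  have hM1 : (1:ℝ) ≤ L.card := by exact_mod_cast hL.card_pos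
  have hlogM : 0 ≤ Real.log L.card := Real.log_nonneg hM1
  -- empRademacher = (1/n) * A
  have hsup_eq : ∀ σ : Fin n → Bool,
      L.sup' hL (fun ℓ => (1/(n:ℝ)) * ∑ i, (if σ i then (1:ℝ) else -1) * ℓ (z i))
        = (1/(n:ℝ)) * L.sup' hL (fun ℓ => ∑ i, (if σ i then (1:ℝ) else -1) * ℓ (z i)) := by
    intro σ
    exact (Finset.comp_sup'_eq_sup'_comp
      (f := fun ℓ => ∑ i, (if σ i then (1:ℝ) else -1) * ℓ (z i)) hL
      (fun x : ℝ => (1/(n:ℝ)) * x)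
      (fun x y => by
        exact mul_max_of_nonneg x y (by positivity))).symm
  have hemp : empRademacher n z L hL = (1 / (n:ℝ)) * A := by
    rw [hA, empRademacher]
    rw [show (∑ σ : Fin n → Bool, L.sup' hL fun ℓ =>
          (1/(n:ℝ)) * ∑ i, (if σ i then (1:ℝ) else -1) * ℓ (z i))
        = ∑ σ : Fin n → Bool, (1/(n:ℝ)) *
            L.sup' hL (fun ℓ => ∑ i, (if σ i then (1:ℝ) else -1) * ℓ (z i)) from
      Finset.sum_congr rfl fun σ _ => hsup_eq σ]
    rw [← Finset.mul_sum]
    ring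
  have hcore : ∀ l : ℝ, 0 < l → A ≤ Real.log L.card / l + l * n / 2 :=
    fun l hl => massart z L hL hrange l hl
  -- conclude: empRademacher ≤ √(2 log|L| / n)
  have hbound : empRademacher n z L hL ≤ Real.sqrt (2 * Real.log L.card / n) := by
    rcases eq_or_lt_of_le hlogM with h0 | hcpos
    · have hle0 : empRademacher n z L hL ≤ 0 := by
        by_contra hcon
        push_neg at hcon
        have hl := hcore (empRademacher n z L hL) hcon
        rw [← h0] at hl
        rw [hemp] at hcon hl
        have hne : (n:ℝ) ≠ 0 := ne_of_gt hnpos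
        rw [zero_div, zero_add] at hl
        -- hl : A ≤ (1/n * A) * n / 2
        have heqA : (1/(n:ℝ) * A) * n = A := by field_simp
        rw [heqA] at hl
        have hA0 : A ≤ 0 := by linarith
        have hcontr : 1/(n:ℝ) * A ≤ 0 :=
          mul_nonpos_iff.mpr (Or.inl ⟨by positivity, hA0⟩)
        linarith
      calc empRademacher n z L hL ≤ 0 := hle0
        _ ≤ Real.sqrt (2 * Real.log L.card / n) := Real.sqrt_nonneg _
    · set l := Real.sqrt (2 * Real.log L.card / n) with hldef
      have hlpos : 0 < l := Real.sqrt_pos.mpr (by positivity)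
      have hl2 : l ^ 2 = 2 * Real.log L.card / n := Real.sq_sqrt (by positivity)
      have hcl : Real.log L.card = l ^ 2 * n / 2 := by
        field_simp at hl2 ⊢
        linarith
      have hAl := hcore l hlpos
      rw [hemp]
      have hstep : (1/(n:ℝ)) * A ≤ (Real.log L.card / l + l * n / 2) / n := by
        have h1 : (1/(n:ℝ)) * A = A / n := by ring
        rw [h1]
        exact (div_le_div_iff_of_pos_right hnpos).mpr hAl
      calc (1/(n:ℝ)) * A ≤ (Real.log L.card / l + l * n / 2) / n := hstep
        _ = l := by
            have hlne : l ≠ 0 := ne_of_gt hlpos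
            have hnne : (n:ℝ) ≠ 0 := ne_of_gt hnpos
            rw [hcl]
            field_simp
            ring
  -- final comparison
  have hfin : Real.sqrt (2 * Real.log L.card / n) ≤
      Real.sqrt (2 / n) * (Real.sqrt (Real.log K) + Real.sqrt (Real.log Dmax)) := by
    have hKpos : (0:ℝ) < (K:ℝ) := by exact_mod_cast hK
    have hDpos : (0:ℝ) < (Dmax:ℝ) := by exact_mod_cast hDmax
    have hlogK : 0 ≤ Real.log K := Real.log_nonneg (by exact_mod_cast hK)
    have hlogD : 0 ≤ Real.log Dmax := Real.log_nonneg (by exact_mod_cast hDmax)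
    have hcle : Real.log L.card ≤ Real.log K + Real.log Dmax := by
      rw [← Real.log_mul (ne_of_gt hKpos) (ne_of_gt hDpos)]
      apply Real.log_le_log (by exact_mod_cast hL.card_pos)
      exact_mod_cast hcard
    calc Real.sqrt (2 * Real.log L.card / n)
        = Real.sqrt ((2 / n) * Real.log L.card) := by ring_nf
      _ = Real.sqrt (2 / n) * Real.sqrt (Real.log L.card) :=
          Real.sqrt_mul (by positivity) _
      _ ≤ Real.sqrt (2 / n) * (Real.sqrt (Real.log K) + Real.sqrt (Real.log Dmax)) := by
          apply mul_le_mul_of_nonneg_left _ (Real.sqrt_nonneg _)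
          calc Real.sqrt (Real.log L.card)
              ≤ Real.sqrt (Real.log K + Real.log Dmax) := Real.sqrt_le_sqrt hcle
            _ ≤ Real.sqrt (Real.log K) + Real.sqrt (Real.log Dmax) :=
                sqrt_add_le' hlogK hlogD
  exact hbound.trans hfin

end
end

section
/- Finite-sample excess distortion bound for product quantisers: let (Z, 𝒜) be a measurable space, μ a probability measure on Z, n ≥ 1, δ ∈ (0,1), M ≥ 1, natural numbers K₁,…,K_M ≥ 1 and D_max ≥ 1, and ℒ a finite nonempty family of measurable functions from Z to [0,1] with cardinality |ℒ| ≤ (Π_{m=1}^M K_m)·D_max. Then with μ^{⊗n}-probability at least 1 − δ over the i.i.d. sample (z₁,…,zₙ), every ℓ ∈ ℒ satisfies ∫ ℓ dμ ≤ (1/n)·Σ_{i=1}^n ℓ(z_i) + 4·√(2/n)·(√(Σ_{m=1}^M log K_m) + √(log D_max)) + 3·√(log(2/δ)/(2n)). -/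
open MeasureTheory ProbabilityTheory Real

noncomputable section

lemma hoeffding_pi {Z : Type*} [MeasurableSpace Z]
    (μ : Measure Z) [IsProbabilityMeasure μ] (n : ℕ)
    (ℓ : Z → ℝ) (hm : Measurable ℓ) (hr : ∀ x, ℓ x ∈ Set.Icc (0 : ℝ) 1)
    (t : ℝ) (ht : 0 ≤ t) :
    Measure.pi (fun _ : Fin n => μ)
      {z : Fin n → Z | (n : ℝ) * t ≤ ∑ i, ((∫ x, ℓ x ∂μ) - ℓ (z i))} ≤
      ENNReal.ofReal (Real.exp (-(n * t ^ 2) / 2)) := by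
  letI : MeasureSpace Z := ⟨μ⟩
  haveI : IsProbabilityMeasure (volume : Measure Z) := ‹IsProbabilityMeasure μ›
  set c : ℝ := ∫ x, ℓ x ∂μ with hc
  have hℓint : Integrable ℓ μ := by
    refine (integrable_const (1 : ℝ)).mono' hm.aestronglyMeasurable ?_
    exact ae_of_all _ fun x => by
      have := hr x; rw [Real.norm_eq_abs, abs_le]; constructor <;> linarith [this.1, this.2]
  have hc0 : 0 ≤ c := integral_nonneg fun x => (hr x).1
  have hc1 : c ≤ 1 := by
    calc c ≤ ∫ _, (1 : ℝ) ∂μ := integral_mono hℓint (integrable_const 1) fun x => (hr x).2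
    _ = 1 := by simp
  set g : Z → ℝ := fun x => c - ℓ x with hg
  have hgm : Measurable g := measurable_const.sub hm
  have hgb : ∀ x, |g x| ≤ 1 := fun x => by
    rw [abs_le]; constructor <;> simp only [hg] <;> [linarith [hc0, (hr x).2]; linarith [hc1, (hr x).1]]
  have hgint : Integrable g μ := (integrable_const c).sub hℓint
  have hgmean : ∫ x, g x ∂μ = 0 := by
    rw [integral_sub (integrable_const c) hℓint]; simp [hc]
  set P : Measure (Fin n → Z) := Measure.pi (fun _ : Fin n => μ) with hP
  set X : (Fin n → Z) → ℝ := fun z => ∑ i, g (z i) with hX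
  have hXm : Measurable X := Finset.measurable_sum _ fun i _ => hgm.comp (measurable_pi_apply i)
  -- integrability of exp(t * X)
  have hexpbd : ∀ z : Fin n → Z, |Real.exp (t * X z)| ≤ Real.exp (t * n) := by
    intro z
    rw [abs_of_pos (Real.exp_pos _), Real.exp_le_exp]
    refine mul_le_mul_of_nonneg_left ?_ ht
    calc X z ≤ ∑ _i : Fin n, (1 : ℝ) :=
        Finset.sum_le_sum fun i _ => (abs_le.1 (hgb (z i))).2
    _ = n := by simp
  have hint : Integrable (fun z => Real.exp (t * X z)) P := by
    refine (integrable_const (Real.exp (t * n))).mono'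
      ((Real.measurable_exp.comp (measurable_const.mul hXm)).aestronglyMeasurable) ?_
    exact ae_of_all _ hexpbd
  -- mgf bound
  have hone : ∫ x, Real.exp (t * g x) ∂μ ≤ Real.exp (t ^ 2 / 2) := by
    have h1 : ∫ x, Real.exp (t * g x) ∂μ ≤ Real.cosh t := by
      have hintexp : Integrable (fun x => Real.exp (t * g x)) μ := by
        refine (integrable_const (Real.exp (t * 1))).mono'
          ((Real.measurable_exp.comp (measurable_const.mul hgm)).aestronglyMeasurable) ?_
        refine ae_of_all _ fun x => ?_
        rw [Real.norm_eq_abs, abs_of_pos (Real.exp_pos _), Real.exp_le_exp]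
        exact mul_le_mul_of_nonneg_left (abs_le.1 (hgb x)).2 ht
      have hintRHS : Integrable (fun x => Real.cosh t + g x * Real.sinh t) μ :=
        (integrable_const _).add (hgint.mul_const _)
      calc ∫ x, Real.exp (t * g x) ∂μ ≤ ∫ x, (Real.cosh t + g x * Real.sinh t) ∂μ := by
            refine integral_mono hintexp hintRHS fun x => ?_
            rw [mul_comm]
            exact Real.exp_mul_le_cosh_add_mul_sinh (hgb x) t
      _ = Real.cosh t := by
            rw [integral_add (integrable_const _) (hgint.mul_const _),
              integral_mul_const, hgmean]
            simp
    exact h1.trans (by simpa using Real.cosh_le_exp_half_sq t)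
  have hmgf : mgf X P t ≤ Real.exp (t ^ 2 / 2) ^ n := by
    have heq : mgf X P t = (∫ x, Real.exp (t * g x) ∂μ) ^ n := by
      rw [mgf]
      have : ∀ z : Fin n → Z, Real.exp (t * X z) = ∏ i, Real.exp (t * g (z i)) := by
        intro z
        rw [hX, Finset.mul_sum, Real.exp_sum]
      simp_rw [this]
      have := MeasureTheory.integral_fintype_prod_eq_pow (ι := Fin n)
        (fun x : Z => Real.exp (t * g x)) (μ := μ)
      simpa [MeasureTheory.volume_pi] using this
    rw [heq]
    have hnn : 0 ≤ ∫ x, Real.exp (t * g x) ∂μ :=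
      integral_nonneg fun x => (Real.exp_pos _).le
    exact pow_le_pow_left₀ hnn hone n
  -- Chernoff
  have hch := measure_ge_le_exp_mul_mgf (μ := P) (X := X) ((n : ℝ) * t) ht hint
  have hreal : (P {z | (n : ℝ) * t ≤ X z}).toReal ≤ Real.exp (-(n * t ^ 2) / 2) := by
    calc (P {z | (n : ℝ) * t ≤ X z}).toReal
        ≤ Real.exp (-t * ((n : ℝ) * t)) * mgf X P t := hch
    _ ≤ Real.exp (-t * ((n : ℝ) * t)) * Real.exp (t ^ 2 / 2) ^ n := by
        exact mul_le_mul_of_nonneg_left hmgf (Real.exp_pos _).le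
    _ = Real.exp (-(n * t ^ 2) / 2) := by
        rw [← Real.exp_nat_mul, ← Real.exp_add]
        ring_nf
  calc P {z : Fin n → Z | (n : ℝ) * t ≤ ∑ i, (c - ℓ (z i))}
      = ENNReal.ofReal ((P {z | (n : ℝ) * t ≤ X z}).toReal) := by
        rw [ENNReal.ofReal_toReal (measure_ne_top _ _)]
  _ ≤ ENNReal.ofReal (Real.exp (-(n * t ^ 2) / 2)) := ENNReal.ofReal_le_ofReal hreal

open scoped BigOperators ENNReal

/-- Finite-sample excess distortion bound for product quantisers.
For a probability measure `μ` on `Z`, `n ≥ 1`, `δ ∈ (0,1)`, `M ≥ 1`, codebook sizes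
`K₁,…,K_M ≥ 1` and `D_max ≥ 1`, and a finite nonempty family `L` of measurable
`[0,1]`-valued functions with `|L| ≤ (Π_m K_m)·D_max`, with `μ^{⊗n}`-probability at
least `1 − δ` over the i.i.d. sample `(z₁,…,zₙ)`, every `ℓ ∈ L` satisfies
`∫ ℓ dμ ≤ (1/n)·Σᵢ ℓ(zᵢ) + 4·√(2/n)·(√(Σ_m log K_m) + √(log D_max))
  + 3·√(log(2/δ)/(2n))`. -/
theorem product_quantiser_excess_bound {Z : Type*} [MeasurableSpace Z]
    (μ : Measure Z) [IsProbabilityMeasure μ]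
    (n : ℕ) (hn : 1 ≤ n) (δ : ℝ) (hδ : δ ∈ Set.Ioo (0 : ℝ) 1)
    (M : ℕ) (hM : 1 ≤ M) (K : Fin M → ℕ) (hK : ∀ m, 1 ≤ K m)
    (Dmax : ℕ) (hDmax : 1 ≤ Dmax)
    (L : Finset (Z → ℝ)) (hL : L.Nonempty)
    (hmeas : ∀ ℓ ∈ L, Measurable ℓ)
    (hrange : ∀ ℓ ∈ L, ∀ x, ℓ x ∈ Set.Icc (0 : ℝ) 1)
    (hcard : L.card ≤ (∏ m, K m) * Dmax) :
    ENNReal.ofReal (1 - δ) ≤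
      Measure.pi (fun _ : Fin n => μ)
        {z : Fin n → Z | ∀ ℓ ∈ L,
          ∫ x, ℓ x ∂μ ≤ (1 / (n : ℝ)) * ∑ i, ℓ (z i)
            + 4 * Real.sqrt (2 / n) *
                (Real.sqrt (∑ m, Real.log (K m)) + Real.sqrt (Real.log Dmax))
            + 3 * Real.sqrt (Real.log (2 / δ) / (2 * n))} := by
  obtain ⟨hδ0, hδ1⟩ := hδ
  have hnpos : (0 : ℝ) < n := by exact_mod_cast hn
  have hn0 : (n : ℝ) ≠ 0 := ne_of_gt hnpos
  set A : ℝ := ∑ m, Real.log (K m) with hA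
  set B : ℝ := Real.log Dmax with hB
  set L2 : ℝ := Real.log (2 / δ) with hL2
  have hA0 : 0 ≤ A := Finset.sum_nonneg fun m _ =>
    Real.log_nonneg (by exact_mod_cast hK m)
  have hB0 : 0 ≤ B := Real.log_nonneg (by exact_mod_cast hDmax)
  have hL2pos : 0 < L2 := Real.log_pos (by rw [lt_div_iff₀ hδ0]; linarith)
  set t : ℝ := 4 * Real.sqrt (2 / n) * (Real.sqrt A + Real.sqrt B)
      + 3 * Real.sqrt (L2 / (2 * n)) with htdef
  have ha : 0 ≤ Real.sqrt A := Real.sqrt_nonneg _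
  have hb : 0 ≤ Real.sqrt B := Real.sqrt_nonneg _
  have hs : 0 ≤ Real.sqrt (2 / n) := Real.sqrt_nonneg _
  have hcc : 0 ≤ Real.sqrt (L2 / (2 * n)) := Real.sqrt_nonneg _
  have ht : 0 ≤ t := by positivity
  clear_value A B L2 t
  -- key arithmetic: A + B + L2 ≤ n * t^2 / 2
  have hkey : A + B + L2 ≤ (n : ℝ) * t ^ 2 / 2 := by
    have ha2 : Real.sqrt A ^ 2 = A := Real.sq_sqrt hA0
    have hb2 : Real.sqrt B ^ 2 = B := Real.sq_sqrt hB0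
    have hs2 : (n : ℝ) * Real.sqrt (2 / n) ^ 2 = 2 := by
      rw [Real.sq_sqrt (by positivity)]; field_simp
    have hc2 : 2 * (n : ℝ) * Real.sqrt (L2 / (2 * n)) ^ 2 = L2 := by
      rw [Real.sq_sqrt (by positivity)]; field_simp
    have expand : (n : ℝ) * t ^ 2 / 2
        = ((n : ℝ) * Real.sqrt (2 / n) ^ 2) * (8 * (Real.sqrt A + Real.sqrt B) ^ 2)
          + 12 * ((n : ℝ) * (Real.sqrt (2 / n) * Real.sqrt (L2 / (2 * n))))
              * (Real.sqrt A + Real.sqrt B)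
          + (2 * (n : ℝ) * Real.sqrt (L2 / (2 * n)) ^ 2) * (9 / 4) := by
      rw [htdef]; ring
    rw [hs2, hc2] at expand
    have cross : 0 ≤ 12 * ((n : ℝ) * (Real.sqrt (2 / n) * Real.sqrt (L2 / (2 * n))))
        * (Real.sqrt A + Real.sqrt B) := by positivity
    nlinarith [ha2, hb2, mul_nonneg ha hb, cross, expand]
  -- real-valued union-bound arithmetic
  have hcardR : (L.card : ℝ) * Real.exp (-(n * t ^ 2) / 2) ≤ δ := by
    have h1 : (L.card : ℝ) ≤ Real.exp (A + B) := by
      have hprod : ((∏ m, K m : ℕ) : ℝ) = Real.exp A := by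
        rw [hA, Real.exp_sum, Nat.cast_prod]
        exact Finset.prod_congr rfl fun m _ =>
          (Real.exp_log (by exact_mod_cast (hK m))).symm
      have hD : ((Dmax : ℕ) : ℝ) = Real.exp B := by
        rw [hB, Real.exp_log (by exact_mod_cast hDmax)]
      calc (L.card : ℝ) ≤ ((∏ m, K m) * Dmax : ℕ) := by exact_mod_cast hcard
      _ = Real.exp A * Real.exp B := by rw [Nat.cast_mul, hprod, hD]
      _ = Real.exp (A + B) := (Real.exp_add A B).symm
    have h2 : Real.exp (-(n * t ^ 2) / 2) ≤ Real.exp (-(A + B + L2)) := by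
      rw [Real.exp_le_exp]; linarith
    calc (L.card : ℝ) * Real.exp (-(n * t ^ 2) / 2)
        ≤ Real.exp (A + B) * Real.exp (-(A + B + L2)) := by
          apply mul_le_mul h1 h2 (Real.exp_pos _).le (Real.exp_pos _).le
    _ = Real.exp (-L2) := by rw [← Real.exp_add]; ring_nf
    _ = δ / 2 := by
        rw [hL2, Real.exp_neg, Real.exp_log (by positivity)]
        field_simp
    _ ≤ δ := by linarith
  -- per-ℓ tail sets
  set P : Measure (Fin n → Z) := Measure.pi (fun _ : Fin n => μ) with hP
  haveI : IsProbabilityMeasure P := by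
    rw [hP]; infer_instance
  set Bad : (Z → ℝ) → Set (Fin n → Z) :=
    fun ℓ => {z : Fin n → Z | (n : ℝ) * t ≤ ∑ i, ((∫ x, ℓ x ∂μ) - ℓ (z i))} with hBad
  clear_value P
  have htail : ∀ ℓ ∈ L, P (Bad ℓ) ≤ ENNReal.ofReal (Real.exp (-(n * t ^ 2) / 2)) := by
    intro ℓ hℓ
    rw [hP, hBad]
    exact hoeffding_pi μ n ℓ (hmeas ℓ hℓ) (hrange ℓ hℓ) t ht
  clear_value Bad
  set Good : Set (Fin n → Z) := {z : Fin n → Z | ∀ ℓ ∈ L,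
          ∫ x, ℓ x ∂μ ≤ (1 / (n : ℝ)) * ∑ i, ℓ (z i)
            + 4 * Real.sqrt (2 / n) * (Real.sqrt A + Real.sqrt B)
            + 3 * Real.sqrt (L2 / (2 * n))} with hGood
  clear_value Good
  have hcover : (Set.univ : Set (Fin n → Z)) ⊆ Good ∪ ⋃ ℓ ∈ L, Bad ℓ := by
    intro z _
    by_cases hz : z ∈ Good
    · exact Or.inl hz
    · right
      rw [hGood] at hz
      simp only [Set.mem_setOf_eq, not_forall] at hz
      obtain ⟨ℓ, hℓL, hineq⟩ := hz
      push_neg at hineq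
      refine Set.mem_biUnion hℓL ?_
      rw [hBad]
      simp only [Set.mem_setOf_eq]
      have hsum : ∑ i, ((∫ x, ℓ x ∂μ) - ℓ (z i))
          = (n : ℝ) * (∫ x, ℓ x ∂μ) - ∑ i, ℓ (z i) := by
        rw [Finset.sum_sub_distrib, Finset.sum_const, Finset.card_univ,
          Fintype.card_fin, nsmul_eq_mul]
      rw [hsum]
      have hineq2 : (1 / (n : ℝ)) * ∑ i, ℓ (z i) + t < ∫ x, ℓ x ∂μ := by
        rw [htdef]; linarith [hineq]
      have hmul := mul_lt_mul_of_pos_left hineq2 hnpos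
      have hexp : (n : ℝ) * ((1 / (n : ℝ)) * ∑ i, ℓ (z i) + t)
          = ∑ i, ℓ (z i) + (n : ℝ) * t := by
        rw [mul_add, ← mul_assoc, mul_one_div_cancel hn0, one_mul]
      linarith [hmul, hexp.ge, hexp.le]
  have hbadle : P (⋃ ℓ ∈ L, Bad ℓ) ≤ ENNReal.ofReal δ := by
    calc P (⋃ ℓ ∈ L, Bad ℓ) ≤ ∑ ℓ ∈ L, P (Bad ℓ) := measure_biUnion_finset_le L Bad
    _ ≤ ∑ _ℓ ∈ L, ENNReal.ofReal (Real.exp (-(n * t ^ 2) / 2)) :=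
        Finset.sum_le_sum htail
    _ = (L.card : ℝ≥0∞) * ENNReal.ofReal (Real.exp (-(n * t ^ 2) / 2)) := by
        rw [Finset.sum_const, nsmul_eq_mul]
    _ = ENNReal.ofReal ((L.card : ℝ) * Real.exp (-(n * t ^ 2) / 2)) := by
        rw [ENNReal.ofReal_mul (Nat.cast_nonneg _), ENNReal.ofReal_natCast]
    _ ≤ ENNReal.ofReal δ := ENNReal.ofReal_le_ofReal hcardR
  have hone : (1 : ℝ≥0∞) ≤ P Good + ENNReal.ofReal δ := by
    calc (1 : ℝ≥0∞) = P Set.univ := (measure_univ).symm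
    _ ≤ P (Good ∪ ⋃ ℓ ∈ L, Bad ℓ) := measure_mono hcover
    _ ≤ P Good + P (⋃ ℓ ∈ L, Bad ℓ) := measure_union_le _ _
    _ ≤ P Good + ENNReal.ofReal δ := add_le_add le_rfl hbadle
  have hfin : ENNReal.ofReal δ ≠ ⊤ := ENNReal.ofReal_ne_top
  rw [← ENNReal.add_le_add_iff_right hfin]
  calc ENNReal.ofReal (1 - δ) + ENNReal.ofReal δ
      = ENNReal.ofReal 1 := by rw [← ENNReal.ofReal_add (by linarith) hδ0.le]; norm_num
  _ = 1 := ENNReal.ofReal_one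
  _ ≤ P Good + ENNReal.ofReal δ := hone

end
end

section
/- Perturbation of the adaptive temperature: let M ≥ 1 and let H, Ĥ : Fin M → ℝ with 0 < h₀ ≤ H_j ≤ h₁ and h₀ ≤ Ĥ_j ≤ h₁ for all j, and suppose |Ĥ_j − H_j| ≤ ε for every j. Then for every m, |√((Σ_j Ĥ_j)/(M·Ĥ_m)) − √((Σ_j H_j)/(M·H_m))| ≤ ε·h₁^{3/2}/h₀^{5/2}. -/
open scoped BigOperators

lemma sqrt_sub_sqrt_abs_le' {a b c : ℝ} (hc : 0 < c) (ha : c ≤ a) (hb : c ≤ b) :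
    |Real.sqrt a - Real.sqrt b| ≤ |a - b| / (2 * Real.sqrt c) := by
  have hsc : 0 < Real.sqrt c := Real.sqrt_pos.mpr hc
  have h1 : Real.sqrt c ≤ Real.sqrt a := Real.sqrt_le_sqrt ha
  have h2 : Real.sqrt c ≤ Real.sqrt b := Real.sqrt_le_sqrt hb
  rw [le_div_iff₀ (by positivity)]
  have key : |Real.sqrt a - Real.sqrt b| * (Real.sqrt a + Real.sqrt b) = |a - b| := by
    rw [← abs_of_nonneg (by positivity : (0:ℝ) ≤ Real.sqrt a + Real.sqrt b), ← abs_mul]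
    congr 1
    have ha' : Real.sqrt a ^ 2 = a := Real.sq_sqrt (by linarith)
    have hb' : Real.sqrt b ^ 2 = b := Real.sq_sqrt (by linarith)
    nlinarith [ha', hb']
  calc |Real.sqrt a - Real.sqrt b| * (2 * Real.sqrt c)
      ≤ |Real.sqrt a - Real.sqrt b| * (Real.sqrt a + Real.sqrt b) :=
        mul_le_mul_of_nonneg_left (by linarith) (abs_nonneg _)
    _ = |a - b| := key

lemma rhs_temperature_eq (h₀ h₁ ε : ℝ) (hh₀ : 0 < h₀) (hh₁ : 0 < h₁) :
    ε * h₁ ^ ((3:ℝ)/2) / h₀ ^ ((5:ℝ)/2)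
      = (2 * ε * h₁ / h₀ ^ 2) / (2 * Real.sqrt (h₀ / h₁)) := by
  have s0 : 0 < Real.sqrt h₀ := Real.sqrt_pos.mpr hh₀
  have s1 : 0 < Real.sqrt h₁ := Real.sqrt_pos.mpr hh₁
  have e1 : h₁ ^ ((3:ℝ)/2) = h₁ * Real.sqrt h₁ := by
    rw [show (3:ℝ)/2 = 1 + 1/2 by norm_num, Real.rpow_add hh₁, Real.rpow_one,
      Real.sqrt_eq_rpow]
  have e2 : h₀ ^ ((5:ℝ)/2) = h₀ ^ 2 * Real.sqrt h₀ := by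
    rw [show (5:ℝ)/2 = ((2:ℕ):ℝ) + 1/2 by norm_num, Real.rpow_add hh₀,
      Real.rpow_natCast, Real.sqrt_eq_rpow]
  rw [e1, e2, Real.sqrt_div hh₀.le]
  field_simp

/-- Perturbation of the adaptive temperature.  If
`0 < h₀ ≤ H_j ≤ h₁` and `h₀ ≤ Ĥ_j ≤ h₁` for all `j`, and `|Ĥ_j − H_j| ≤ ε` for
every `j`, then for every `m`,
`|√((Σ_j Ĥ_j)/(M·Ĥ_m)) − √((Σ_j H_j)/(M·H_m))| ≤ ε·h₁^{3/2}/h₀^{5/2}`. -/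
theorem adaptive_temperature_perturbation (M : ℕ) (hM : 1 ≤ M)
    (H Hhat : Fin M → ℝ) (h₀ h₁ : ℝ) (hh₀ : 0 < h₀)
    (hH : ∀ j, h₀ ≤ H j ∧ H j ≤ h₁) (hHhat : ∀ j, h₀ ≤ Hhat j ∧ Hhat j ≤ h₁)
    (ε : ℝ) (hε : ∀ j, |Hhat j - H j| ≤ ε) :
    ∀ m, |Real.sqrt ((∑ j, Hhat j) / ((M : ℝ) * Hhat m))
            - Real.sqrt ((∑ j, H j) / ((M : ℝ) * H m))|
          ≤ ε * h₁ ^ ((3 : ℝ) / 2) / h₀ ^ ((5 : ℝ) / 2) := by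
  intro m
  have hM0 : (0:ℝ) < M := by exact_mod_cast hM
  obtain ⟨hH0m, hH1m⟩ := hH m
  obtain ⟨hHh0m, hHh1m⟩ := hHhat m
  have h01 : h₀ ≤ h₁ := le_trans hH0m hH1m
  have hh₁ : 0 < h₁ := lt_of_lt_of_le hh₀ h01
  have hε0 : 0 ≤ ε := le_trans (abs_nonneg _) (hε m)
  set a := (∑ j, Hhat j) / ((M:ℝ) * Hhat m) with ha_def
  set b := (∑ j, H j) / ((M:ℝ) * H m) with hb_def
  have hc : (0:ℝ) < h₀ / h₁ := by positivity
  have hSa : (M:ℝ) * h₀ ≤ ∑ j, Hhat j := by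
    calc (M:ℝ) * h₀ = ∑ _j : Fin M, h₀ := by simp [mul_comm]
      _ ≤ ∑ j, Hhat j := Finset.sum_le_sum fun j _ => (hHhat j).1
  have hSb : (M:ℝ) * h₀ ≤ ∑ j, H j := by
    calc (M:ℝ) * h₀ = ∑ _j : Fin M, h₀ := by simp [mul_comm]
      _ ≤ ∑ j, H j := Finset.sum_le_sum fun j _ => (hH j).1
  have hHhm_pos : 0 < Hhat m := lt_of_lt_of_le hh₀ hHh0m
  have hHm_pos : 0 < H m := lt_of_lt_of_le hh₀ hH0m
  have ha_lb : h₀ / h₁ ≤ a := by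
    rw [ha_def, div_le_div_iff₀ hh₁ (by positivity)]
    have k1 : ((M:ℝ) * h₀) * h₁ ≤ (∑ j, Hhat j) * h₁ :=
      mul_le_mul_of_nonneg_right hSa hh₁.le
    have k2 : ((M:ℝ) * h₀) * Hhat m ≤ ((M:ℝ) * h₀) * h₁ :=
      mul_le_mul_of_nonneg_left hHh1m (by positivity)
    nlinarith [k1, k2]
  have hb_lb : h₀ / h₁ ≤ b := by
    rw [hb_def, div_le_div_iff₀ hh₁ (by positivity)]
    have k1 : ((M:ℝ) * h₀) * h₁ ≤ (∑ j, H j) * h₁ :=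
      mul_le_mul_of_nonneg_right hSb hh₁.le
    have k2 : ((M:ℝ) * h₀) * H m ≤ ((M:ℝ) * h₀) * h₁ :=
      mul_le_mul_of_nonneg_left hH1m (by positivity)
    nlinarith [k1, k2]
  have hmain := sqrt_sub_sqrt_abs_le' hc ha_lb hb_lb
  -- bound on |a - b|
  have hnum : |(∑ j, Hhat j) * H m - (∑ j, H j) * Hhat m| ≤ (M:ℝ) * (2 * ε * h₁) := by
    have hsplit : (∑ j, Hhat j) * H m - (∑ j, H j) * Hhat m
        = ∑ j, (Hhat j * H m - H j * Hhat m) := by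
      rw [Finset.sum_sub_distrib, Finset.sum_mul, Finset.sum_mul]
    rw [hsplit]
    calc |∑ j, (Hhat j * H m - H j * Hhat m)|
        ≤ ∑ j, |Hhat j * H m - H j * Hhat m| := Finset.abs_sum_le_sum_abs _ _
      _ ≤ ∑ _j : Fin M, (2 * ε * h₁) := by
          refine Finset.sum_le_sum fun j _ => ?_
          obtain ⟨hj0, hj1⟩ := hH j
          obtain ⟨hhj0, hhj1⟩ := hHhat j
          have e1 := hε j
          have e2 : |H m - Hhat m| ≤ ε := by rw [abs_sub_comm]; exact hε m
          calc |Hhat j * H m - H j * Hhat m|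
              = |(Hhat j - H j) * H m + H j * (H m - Hhat m)| := by ring_nf
            _ ≤ |(Hhat j - H j) * H m| + |H j * (H m - Hhat m)| := abs_add_le _ _
            _ = |Hhat j - H j| * |H m| + |H j| * |H m - Hhat m| := by
                rw [abs_mul, abs_mul]
            _ ≤ ε * h₁ + h₁ * ε := by
                have hm1 : |H m| ≤ h₁ := by rw [abs_of_pos (by linarith)]; exact hH1m
                have hm2 : |H j| ≤ h₁ := by rw [abs_of_pos (by linarith)]; exact hj1
                have := abs_nonneg (Hhat j - H j)
                have := abs_nonneg (H m - Hhat m)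
                have := abs_nonneg (H j)
                nlinarith
            _ = 2 * ε * h₁ := by ring
      _ = (M:ℝ) * (2 * ε * h₁) := by simp [mul_comm]
  have hden : (0:ℝ) < (M:ℝ) * Hhat m * H m := by positivity
  have hMne : (M:ℝ) ≠ 0 := ne_of_gt hM0
  have hHhmne : Hhat m ≠ 0 := ne_of_gt hHhm_pos
  have hHmne : H m ≠ 0 := ne_of_gt hHm_pos
  have heq : a - b = ((∑ j, Hhat j) * H m - (∑ j, H j) * Hhat m)
      / ((M:ℝ) * Hhat m * H m) := by
    rw [ha_def, hb_def]
    field_simp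
  have hab : |a - b| ≤ 2 * ε * h₁ / h₀ ^ 2 := by
    rw [heq, abs_div, abs_of_pos hden]
    have hden_lb : (M:ℝ) * h₀ ^ 2 ≤ (M:ℝ) * Hhat m * H m := by
      have k1 : h₀ * h₀ ≤ Hhat m * H m :=
        mul_le_mul hHh0m hH0m hh₀.le hHhm_pos.le
      nlinarith [k1]
    calc |(∑ j, Hhat j) * H m - (∑ j, H j) * Hhat m| / ((M:ℝ) * Hhat m * H m)
        ≤ ((M:ℝ) * (2 * ε * h₁)) / ((M:ℝ) * h₀ ^ 2) := by
          apply div_le_div₀ (mul_nonneg hM0.le (by nlinarith [mul_nonneg hε0 hh₁.le]))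
            hnum (by positivity) hden_lb
      _ = 2 * ε * h₁ / h₀ ^ 2 := by
          rw [mul_div_mul_left _ _ (ne_of_gt hM0)]
  -- rewrite the RHS
  rw [rhs_temperature_eq h₀ h₁ ε hh₀ hh₁]
  calc |Real.sqrt a - Real.sqrt b|
      ≤ |a - b| / (2 * Real.sqrt (h₀ / h₁)) := hmain
    _ ≤ (2 * ε * h₁ / h₀ ^ 2) / (2 * Real.sqrt (h₀ / h₁)) := by
        gcongr
end
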